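/- arXiv:2303.17772 — 4 statements merged into one kernel-verified Lean document; each statement's English description precedes it below -/
import Mathlib

section
/- Let 0 ≤ ε ≤ 1 and let h, g : ℝ × E → ℝ be smooth. Define v(t,x) := exp(h(t,x))·g(t,x), and for a smooth w : ℝ × E → ℝ set 𝓛_ε w := ∂ₜw − Δw + ε·Δ(Δw) + w, where the Laplacian Δ acts in the space variable x at each fixed time t. Then pointwise on ℝ × E one has 𝓛_ε v = (𝓛_ε h)·v − h·v + e^h·(𝓛_ε g) + F_ε(h)·v − 2·G_ε(h, v), where F_ε(h) and G_ε(h, v) are computed with spatial derivatives at each fixed time. -/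
open Real

noncomputable section

/-- Three-dimensional Euclidean space. -/
abbrev E3 := EuclideanSpace ℝ (Fin 3)

/-- Laplacian of `f : E3 → ℝ` (sum of second partial derivatives). -/
def lap (f : E3 → ℝ) : E3 → ℝ := fun x =>
  ∑ i : Fin 3, fderiv ℝ (fun y => fderiv ℝ f y (EuclideanSpace.single i 1)) x
    (EuclideanSpace.single i 1)

/-- `B(f,g) = ∇f · ∇g`. -/
def Bp (f g : E3 → ℝ) : E3 → ℝ := fun x => (inner ℝ (gradient f x) (gradient g x) : ℝ)

/-- `T(f,g,h) = B(f,g)·Δh + B(B(f,g),h)`. -/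
def Tp (f g h : E3 → ℝ) : E3 → ℝ := fun x => Bp f g x * lap h x + Bp (Bp f g) h x

/-- `B̃(f,g) = ∇(Δf)·∇g + ∇f·∇(Δg) + 2·Δf·Δg + Δ(B(f,g))`. -/
def Btil (f g : E3 → ℝ) : E3 → ℝ := fun x =>
  Bp (lap f) g x + Bp f (lap g) x + 2 * lap f x * lap g x + lap (Bp f g) x

/-- `L_ε f = Δf − ε·Δ(Δf)`. -/
def Lop (ε : ℝ) (f : E3 → ℝ) : E3 → ℝ := fun x => lap f x - ε * lap (lap f) x

/-- `F_ε(h)`. -/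
def Fop (ε : ℝ) (h : E3 → ℝ) : E3 → ℝ := fun x =>
  Bp h h x + ε * (lap h x) ^ 2 +
    ε * (-(Btil h h x) + 2 * Tp h h h x - (Bp h h x) ^ 2)

/-- `G_ε(h,v)`. -/
def Gop (ε : ℝ) (h v : E3 → ℝ) : E3 → ℝ := fun x =>
  Bp h v x + ε * lap h x * lap v x +
    ε * (-(Btil h v x) + 2 * Tp v h h x + Tp h h v x - 2 * Bp h h x * Bp h v x)

/-- `A¹_ε(f,g) = B(f,g) + ε·Δf·Δg − ε·B̃(f,g)`. -/
def A1 (ε : ℝ) (f g : E3 → ℝ) : E3 → ℝ := fun x =>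
  Bp f g x + ε * lap f x * lap g x - ε * Btil f g x

/-- `A²_ε(h) = A¹_ε(h,h) − ε·(2·T(h,h,h) + B(h,h)²)`. -/
def A2 (ε : ℝ) (h : E3 → ℝ) : E3 → ℝ := fun x =>
  A1 ε h h x - ε * (2 * Tp h h h x + (Bp h h x) ^ 2)

/-- `A³_ε(h,g) = −ε·(2·T(g,h,h) + T(h,h,g) + 2·B(h,h)·B(h,g))`. -/
def A3 (ε : ℝ) (h g : E3 → ℝ) : E3 → ℝ := fun x =>
  -ε * (2 * Tp g h h x + Tp h h g x + 2 * Bp h h x * Bp h g x)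

/-- Time derivative `∂ₜ w` of `w : ℝ × E3 → ℝ`. -/
def ptime (w : ℝ × E3 → ℝ) : ℝ × E3 → ℝ := fun p => deriv (fun s => w (s, p.2)) p.1

/-- Spatial Laplacian of `w : ℝ × E3 → ℝ` at each fixed time. -/
def lapT (w : ℝ × E3 → ℝ) : ℝ × E3 → ℝ := fun p => lap (fun y => w (p.1, y)) p.2

/-- `𝓛_ε w = ∂ₜw − Δw + ε·Δ(Δw) + w` (Laplacian in space at each fixed time). -/
def CLop (ε : ℝ) (w : ℝ × E3 → ℝ) : ℝ × E3 → ℝ := fun p =>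
  ptime w p - lapT w p + ε * lapT (lapT w) p + w p

/-- `F_ε(h)` with spatial derivatives at each fixed time. -/
def FopT (ε : ℝ) (h : ℝ × E3 → ℝ) : ℝ × E3 → ℝ := fun p =>
  Fop ε (fun y => h (p.1, y)) p.2

/-- `G_ε(h,v)` with spatial derivatives at each fixed time. -/
def GopT (ε : ℝ) (h v : ℝ × E3 → ℝ) : ℝ × E3 → ℝ := fun p =>
  Gop ε (fun y => h (p.1, y)) (fun y => v (p.1, y)) p.2

set_option linter.unusedSectionVars false
namespace Aux
def pd (i : Fin 3) (f : E3 → ℝ) : E3 → ℝ := fun x => fderiv ℝ f x (EuclideanSpace.single i 1)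

lemma cd_diff' {X Y : Type*} [NormedAddCommGroup X] [NormedSpace ℝ X] [NormedAddCommGroup Y]
    [NormedSpace ℝ Y] {f : X → Y} (hf : ContDiff ℝ (⊤:ℕ∞) f) : Differentiable ℝ f :=
  hf.differentiable (by simp)

lemma cd_diff {f : E3 → ℝ} (hf : ContDiff ℝ (⊤:ℕ∞) f) : Differentiable ℝ f := cd_diff' hf

lemma pd_contDiff (i : Fin 3) {f : E3 → ℝ} (hf : ContDiff ℝ (⊤:ℕ∞) f) :
    ContDiff ℝ (⊤:ℕ∞) (pd i f) :=
  ((hf.fderiv_right (le_refl _)).clm_apply contDiff_const)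

lemma pd_mul (i : Fin 3) {f g : E3 → ℝ} (hf : ContDiff ℝ (⊤:ℕ∞) f) (hg : ContDiff ℝ (⊤:ℕ∞) g) :
    pd i (fun y => f y * g y) = fun y => f y * pd i g y + g y * pd i f y := by
  funext x
  have := fderiv_fun_mul (𝕜 := ℝ) (cd_diff hf x) (cd_diff hg x)
  simp [pd, this, mul_comm]

lemma pd_add (i : Fin 3) {f g : E3 → ℝ} (hf : ContDiff ℝ (⊤:ℕ∞) f) (hg : ContDiff ℝ (⊤:ℕ∞) g) :
    pd i (fun y => f y + g y) = fun y => pd i f y + pd i g y := by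
  funext x
  have := fderiv_fun_add (𝕜 := ℝ) (cd_diff hf x) (cd_diff hg x)
  simp [pd, this]

lemma pd_const_mul (i : Fin 3) (c : ℝ) {f : E3 → ℝ} (hf : ContDiff ℝ (⊤:ℕ∞) f) :
    pd i (fun y => c * f y) = fun y => c * pd i f y := by
  funext x
  have := fderiv_const_mul (𝕜 := ℝ) (cd_diff hf x) c
  simp [pd, this]

lemma pd_exp (i : Fin 3) {f : E3 → ℝ} (hf : ContDiff ℝ (⊤:ℕ∞) f) :
    pd i (fun y => Real.exp (f y)) = fun y => Real.exp (f y) * pd i f y := by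
  funext x
  have := fderiv_exp (cd_diff hf x)
  simp [pd, this]

lemma gradient_apply (f : E3 → ℝ) (x : E3) (i : Fin 3) :
    gradient f x i = pd i f x := by
  have h1 : (inner ℝ (gradient f x) (EuclideanSpace.single i (1:ℝ)) : ℝ)
      = fderiv ℝ f x (EuclideanSpace.single i 1) := by
    rw [gradient, InnerProductSpace.toDual_symm_apply]
  rw [EuclideanSpace.inner_single_right] at h1
  simpa [pd] using h1

lemma Bp_eq_sum (f g : E3 → ℝ) (x : E3) : Bp f g x = ∑ i : Fin 3, pd i f x * pd i g x := by
  rw [Bp, PiLp.inner_apply]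
  refine Finset.sum_congr rfl fun i _ => ?_
  simp only [gradient_apply]
  simp [mul_comm]

lemma Bp_symm (f g : E3 → ℝ) : Bp f g = Bp g f := by
  funext x; simp [Bp_eq_sum, mul_comm]

lemma lap_eq (f : E3 → ℝ) (x : E3) : lap f x = ∑ i : Fin 3, pd i (pd i f) x := rfl

lemma Bp_contDiff {f g : E3 → ℝ} (hf : ContDiff ℝ (⊤:ℕ∞) f) (hg : ContDiff ℝ (⊤:ℕ∞) g) :
    ContDiff ℝ (⊤:ℕ∞) (Bp f g) := by
  have : Bp f g = fun x => ∑ i : Fin 3, pd i f x * pd i g x := funext fun x => Bp_eq_sum f g x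
  rw [this]
  exact ContDiff.sum fun i _ => (pd_contDiff i hf).mul (pd_contDiff i hg)

lemma lap_contDiff {f : E3 → ℝ} (hf : ContDiff ℝ (⊤:ℕ∞) f) :
    ContDiff ℝ (⊤:ℕ∞) (lap f) := by
  have : lap f = fun x => ∑ i : Fin 3, pd i (pd i f) x := rfl
  rw [this]
  exact ContDiff.sum fun i _ => pd_contDiff i (pd_contDiff i hf)

lemma lap_add {f g : E3 → ℝ} (hf : ContDiff ℝ (⊤:ℕ∞) f) (hg : ContDiff ℝ (⊤:ℕ∞) g) (x : E3) :
    lap (fun y => f y + g y) x = lap f x + lap g x := by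
  simp only [lap_eq]
  rw [← Finset.sum_add_distrib]
  refine Finset.sum_congr rfl fun i _ => ?_
  rw [pd_add i hf hg, pd_add i (pd_contDiff i hf) (pd_contDiff i hg)]

lemma lap_const_mul (c : ℝ) {f : E3 → ℝ} (hf : ContDiff ℝ (⊤:ℕ∞) f) (x : E3) :
    lap (fun y => c * f y) x = c * lap f x := by
  simp only [lap_eq]
  rw [Finset.mul_sum]
  refine Finset.sum_congr rfl fun i _ => ?_
  rw [pd_const_mul i c hf, pd_const_mul i c (pd_contDiff i hf)]

lemma lap_mul {f g : E3 → ℝ} (hf : ContDiff ℝ (⊤:ℕ∞) f) (hg : ContDiff ℝ (⊤:ℕ∞) g) (x : E3) :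
    lap (fun y => f y * g y) x = f x * lap g x + g x * lap f x + 2 * Bp f g x := by
  simp only [lap_eq, Bp_eq_sum]
  have : ∀ i : Fin 3, pd i (pd i (fun y => f y * g y)) x
      = f x * pd i (pd i g) x + g x * pd i (pd i f) x + 2 * (pd i f x * pd i g x) := by
    intro i
    rw [pd_mul i hf hg,
      pd_add i (hf.mul (pd_contDiff i hg)) (hg.mul (pd_contDiff i hf)),
      pd_mul i hf (pd_contDiff i hg), pd_mul i hg (pd_contDiff i hf)]
    ring
  rw [Finset.sum_congr rfl fun i _ => this i]
  rw [Finset.sum_add_distrib, Finset.sum_add_distrib, ← Finset.mul_sum, ← Finset.mul_sum,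
    ← Finset.mul_sum]

lemma lap_exp {f : E3 → ℝ} (hf : ContDiff ℝ (⊤:ℕ∞) f) (x : E3) :
    lap (fun y => Real.exp (f y)) x = Real.exp (f x) * (lap f x + Bp f f x) := by
  simp only [lap_eq, Bp_eq_sum]
  have : ∀ i : Fin 3, pd i (pd i (fun y => Real.exp (f y))) x
      = Real.exp (f x) * (pd i (pd i f) x + pd i f x * pd i f x) := by
    intro i
    rw [pd_exp i hf, pd_mul i hf.exp (pd_contDiff i hf), pd_exp i hf]
    ring
  rw [Finset.sum_congr rfl fun i _ => this i, ← Finset.mul_sum, Finset.sum_add_distrib]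

lemma Bp_add_right {f g₁ g₂ : E3 → ℝ} (hg₁ : ContDiff ℝ (⊤:ℕ∞) g₁) (hg₂ : ContDiff ℝ (⊤:ℕ∞) g₂)
    (x : E3) : Bp f (fun y => g₁ y + g₂ y) x = Bp f g₁ x + Bp f g₂ x := by
  simp only [Bp_eq_sum]
  rw [← Finset.sum_add_distrib]
  refine Finset.sum_congr rfl fun i _ => ?_
  rw [pd_add i hg₁ hg₂]; ring

lemma Bp_const_mul_right (c : ℝ) {f g : E3 → ℝ} (hg : ContDiff ℝ (⊤:ℕ∞) g) (x : E3) :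
    Bp f (fun y => c * g y) x = c * Bp f g x := by
  simp only [Bp_eq_sum]
  rw [Finset.mul_sum]
  refine Finset.sum_congr rfl fun i _ => ?_
  rw [pd_const_mul i c hg]; ring

lemma Bp_mul_right {f g₁ g₂ : E3 → ℝ} (hg₁ : ContDiff ℝ (⊤:ℕ∞) g₁) (hg₂ : ContDiff ℝ (⊤:ℕ∞) g₂)
    (x : E3) : Bp f (fun y => g₁ y * g₂ y) x = g₁ x * Bp f g₂ x + g₂ x * Bp f g₁ x := by
  simp only [Bp_eq_sum]
  rw [Finset.mul_sum, Finset.mul_sum, ← Finset.sum_add_distrib]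
  refine Finset.sum_congr rfl fun i _ => ?_
  rw [pd_mul i hg₁ hg₂]; ring

lemma Bp_exp_right {f h : E3 → ℝ} (hh : ContDiff ℝ (⊤:ℕ∞) h) (x : E3) :
    Bp f (fun y => Real.exp (h y)) x = Real.exp (h x) * Bp f h x := by
  simp only [Bp_eq_sum]
  rw [Finset.mul_sum]
  refine Finset.sum_congr rfl fun i _ => ?_
  rw [pd_exp i hh]; ring



/-- `S = Δh + B(h,h)`. -/
def Sf (H : E3 → ℝ) : E3 → ℝ := fun y => lap H y + Bp H H y
def Pf (H G : E3 → ℝ) : E3 → ℝ := fun y => lap G y + G y * Sf H y + 2 * Bp H G y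
def Qf (H G : E3 → ℝ) : E3 → ℝ := fun y => Bp H G y + G y * Bp H H y

lemma Sf_contDiff {H : E3 → ℝ} (hH : ContDiff ℝ (⊤:ℕ∞) H) : ContDiff ℝ (⊤:ℕ∞) (Sf H) :=
  (lap_contDiff hH).add (Bp_contDiff hH hH)
lemma Pf_contDiff {H G : E3 → ℝ} (hH : ContDiff ℝ (⊤:ℕ∞) H) (hG : ContDiff ℝ (⊤:ℕ∞) G) :
    ContDiff ℝ (⊤:ℕ∞) (Pf H G) :=
  ((lap_contDiff hG).add (hG.mul (Sf_contDiff hH))).add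
    (contDiff_const.mul (Bp_contDiff hH hG))
lemma Qf_contDiff {H G : E3 → ℝ} (hH : ContDiff ℝ (⊤:ℕ∞) H) (hG : ContDiff ℝ (⊤:ℕ∞) G) :
    ContDiff ℝ (⊤:ℕ∞) (Qf H G) :=
  (Bp_contDiff hH hG).add (hG.mul (Bp_contDiff hH hH))

lemma lap_exp_mul {H F : E3 → ℝ} (hH : ContDiff ℝ (⊤:ℕ∞) H) (hF : ContDiff ℝ (⊤:ℕ∞) F)
    (x : E3) : lap (fun y => Real.exp (H y) * F y) x
      = Real.exp (H x) * (lap F x + F x * Sf H x + 2 * Bp H F x) := by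
  rw [lap_mul hH.exp hF x, lap_exp hH x]
  have hs : Bp (fun y => Real.exp (H y)) F x = Real.exp (H x) * Bp H F x := by
    rw [Bp_symm (fun y => Real.exp (H y)) F]
    rw [Bp_exp_right hH x, Bp_symm F H]
  rw [hs, Sf]; ring

lemma Bp_exp_mul {W H F : E3 → ℝ} (hH : ContDiff ℝ (⊤:ℕ∞) H) (hF : ContDiff ℝ (⊤:ℕ∞) F)
    (x : E3) : Bp W (fun y => Real.exp (H y) * F y) x
      = Real.exp (H x) * (Bp W F x + F x * Bp W H x) := by
  rw [Bp_mul_right hH.exp hF x, Bp_exp_right hH x]; ring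

variable {H G : E3 → ℝ} (hH : ContDiff ℝ (⊤:ℕ∞) H) (hG : ContDiff ℝ (⊤:ℕ∞) G)

include hH hG

lemma lap_Sf (x : E3) : lap (Sf H) x = lap (lap H) x + lap (Bp H H) x := by
  have := lap_add (lap_contDiff hH) (Bp_contDiff hH hH) x
  exact this

lemma Bp_Sf (W : E3 → ℝ) (x : E3) : Bp W (Sf H) x = Bp W (lap H) x + Bp W (Bp H H) x := by
  have := Bp_add_right (f := W) (lap_contDiff hH) (Bp_contDiff hH hH) x
  exact this

lemma lap_Pf (x : E3) : lap (Pf H G) x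
    = lap (lap G) x + (G x * (lap (lap H) x + lap (Bp H H) x)
        + Sf H x * lap G x + 2 * (Bp G (lap H) x + Bp G (Bp H H) x))
      + 2 * lap (Bp H G) x := by
  have a1 : lap (Pf H G) x
      = lap (fun y => lap G y + G y * Sf H y) x + lap (fun y => 2 * Bp H G y) x :=
    lap_add ((lap_contDiff hG).add (hG.mul (Sf_contDiff hH)))
      (contDiff_const.mul (Bp_contDiff hH hG)) x
  rw [a1, lap_add (lap_contDiff hG) (hG.mul (Sf_contDiff hH)),
    lap_mul hG (Sf_contDiff hH), lap_const_mul 2 (Bp_contDiff hH hG),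
    lap_Sf hH hG, Bp_Sf hH hG G]

lemma Bp_Pf (x : E3) : Bp H (Pf H G) x
    = Bp H (lap G) x + (G x * (Bp H (lap H) x + Bp H (Bp H H) x)
        + Sf H x * Bp H G x) + 2 * Bp H (Bp H G) x := by
  have a1 : Bp H (Pf H G) x
      = Bp H (fun y => lap G y + G y * Sf H y) x + Bp H (fun y => 2 * Bp H G y) x :=
    Bp_add_right ((lap_contDiff hG).add (hG.mul (Sf_contDiff hH)))
      (contDiff_const.mul (Bp_contDiff hH hG)) x
  rw [a1, Bp_add_right (lap_contDiff hG) (hG.mul (Sf_contDiff hH)),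
    Bp_mul_right hG (Sf_contDiff hH), Bp_const_mul_right 2 (Bp_contDiff hH hG),
    Bp_Sf hH hG H]

lemma lap_Qf (x : E3) : lap (Qf H G) x
    = lap (Bp H G) x + (G x * lap (Bp H H) x + Bp H H x * lap G x
        + 2 * Bp G (Bp H H) x) := by
  have a1 : lap (Qf H G) x
      = lap (Bp H G) x + lap (fun y => G y * Bp H H y) x :=
    lap_add (Bp_contDiff hH hG) (hG.mul (Bp_contDiff hH hH)) x
  rw [a1, lap_mul hG (Bp_contDiff hH hH)]

lemma Bp_Qf (x : E3) : Bp H (Qf H G) x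
    = Bp H (Bp H G) x + (G x * Bp H (Bp H H) x + Bp H H x * Bp H G x) := by
  have a1 : Bp H (Qf H G) x
      = Bp H (Bp H G) x + Bp H (fun y => G y * Bp H H y) x :=
    Bp_add_right (Bp_contDiff hH hG) (hG.mul (Bp_contDiff hH hH)) x
  rw [a1, Bp_mul_right hG (Bp_contDiff hH hH)]


lemma spatial (ε : ℝ) (x : E3) :
    -(lap (fun y => Real.exp (H y) * G y) x)
      + ε * lap (lap (fun y => Real.exp (H y) * G y)) x
    = (-(lap H x) + ε * lap (lap H) x) * (Real.exp (H x) * G x)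
      + Real.exp (H x) * (-(lap G x) + ε * lap (lap G) x)
      + Fop ε H x * (Real.exp (H x) * G x)
      - 2 * Gop ε H (fun y => Real.exp (H y) * G y) x := by
  have hPf := Pf_contDiff hH hG
  have hQf := Qf_contDiff hH hG
  have e1 : lap (fun y => Real.exp (H y) * G y) = fun y => Real.exp (H y) * Pf H G y :=
    funext fun y => lap_exp_mul hH hG y
  have e2 : Bp H (fun y => Real.exp (H y) * G y) = fun y => Real.exp (H y) * Qf H G y :=
    funext fun y => Bp_exp_mul hH hG y
  have t2 : lap (fun y => Real.exp (H y) * Pf H G y) x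
      = Real.exp (H x) * (lap (Pf H G) x + Pf H G x * Sf H x + 2 * Bp H (Pf H G) x) :=
    lap_exp_mul hH hPf x
  have t7 : Bp H (fun y => Real.exp (H y) * Pf H G y) x
      = Real.exp (H x) * (Bp H (Pf H G) x + Pf H G x * Bp H H x) := Bp_exp_mul hH hPf x
  have t8 : lap (fun y => Real.exp (H y) * Qf H G y) x
      = Real.exp (H x) * (lap (Qf H G) x + Qf H G x * Sf H x + 2 * Bp H (Qf H G) x) :=
    lap_exp_mul hH hQf x
  have t5 : Bp (fun y => Real.exp (H y) * Qf H G y) H x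
      = Real.exp (H x) * (Bp H (Qf H G) x + Qf H G x * Bp H H x) := by
    rw [Bp_symm (fun y => Real.exp (H y) * Qf H G y) H]; exact Bp_exp_mul hH hQf x
  have t6 : Bp (lap H) (fun y => Real.exp (H y) * G y) x
      = Real.exp (H x) * (Bp G (lap H) x + G x * Bp H (lap H) x) := by
    have h := Bp_exp_mul (W := lap H) hH hG x
    rw [h, Bp_symm (lap H) G, Bp_symm (lap H) H]
  have t9 : Bp (Bp H H) (fun y => Real.exp (H y) * G y) x
      = Real.exp (H x) * (Bp G (Bp H H) x + G x * Bp H (Bp H H) x) := by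
    have h := Bp_exp_mul (W := Bp H H) hH hG x
    rw [h, Bp_symm (Bp H H) G, Bp_symm (Bp H H) H]
  simp only [Fop, Gop, Tp, Btil]
  rw [Bp_symm (fun y => Real.exp (H y) * G y) H]
  simp only [e1, e2]
  rw [t2, t5, t6, t7, t8, t9, Bp_symm (lap H) H, Bp_symm (Bp H H) H,
    lap_Pf hH hG x, Bp_Pf hH hG x, lap_Qf hH hG x, Bp_Qf hH hG x]
  simp only [Pf, Qf, Sf]
  ring

end Aux

/-- Proposition B.6 (derivation of the equation for `v = e^h g`, parabolic form):
`𝓛_ε v = (𝓛_ε h)·v − h·v + e^h·(𝓛_ε g) + F_ε(h)·v − 2·G_ε(h, v)`. -/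
theorem CL_exp_mul (ε : ℝ) (hε0 : 0 ≤ ε) (hε1 : ε ≤ 1) (h g : ℝ × E3 → ℝ)
    (hh : ContDiff ℝ (⊤ : ℕ∞) h) (hg : ContDiff ℝ (⊤ : ℕ∞) g) (p : ℝ × E3) :
    CLop ε (fun q => Real.exp (h q) * g q) p =
      CLop ε h p * (Real.exp (h p) * g p) - h p * (Real.exp (h p) * g p)
        + Real.exp (h p) * CLop ε g p
        + FopT ε h p * (Real.exp (h p) * g p)
        - 2 * GopT ε h (fun q => Real.exp (h q) * g q) p := by
  obtain ⟨t, x⟩ := p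
  have hH : ContDiff ℝ (⊤:ℕ∞) (fun y => h (t, y)) :=
    hh.comp (contDiff_const.prodMk contDiff_id)
  have hG : ContDiff ℝ (⊤:ℕ∞) (fun y => g (t, y)) :=
    hg.comp (contDiff_const.prodMk contDiff_id)
  have hdh : DifferentiableAt ℝ (fun s => h (s, x)) t :=
    ((Aux.cd_diff' hh).comp ((differentiable_id).prodMk (differentiable_const x))).differentiableAt
  have hdg : DifferentiableAt ℝ (fun s => g (s, x)) t :=
    ((Aux.cd_diff' hg).comp ((differentiable_id).prodMk (differentiable_const x))).differentiableAt
  have ht : deriv (fun s => Real.exp (h (s, x)) * g (s, x)) t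
      = Real.exp (h (t, x)) * g (t, x) * deriv (fun s => h (s, x)) t
        + Real.exp (h (t, x)) * deriv (fun s => g (s, x)) t := by
    rw [deriv_fun_mul hdh.exp hdg, _root_.deriv_exp hdh]
    ring
  have hs := Aux.spatial hH hG ε x
  simp only [CLop, FopT, GopT, ptime, lapT]
  rw [ht]
  linear_combination hs
end
end

section
/- Let 0 ≤ ε ≤ 1 and let h, g : E → ℝ be smooth. Set v := e^h·g. Then pointwise on E one has L_ε v = (L_ε h)·v + e^h·(L_ε g) − F_ε(h)·v + 2·G_ε(h, v). -/
open Real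

noncomputable section

namespace PB5

def pd (i : Fin 3) (f : E3 → ℝ) : E3 → ℝ := fun x => fderiv ℝ f x (EuclideanSpace.single i 1)

lemma dAt {f : E3 → ℝ} (hf : ContDiff ℝ (⊤ : ℕ∞) f) (x : E3) : DifferentiableAt ℝ f x :=
  (hf.differentiable (by simp)).differentiableAt

lemma smooth_pd {f : E3 → ℝ} (hf : ContDiff ℝ (⊤ : ℕ∞) f) (i : Fin 3) :
    ContDiff ℝ (⊤ : ℕ∞) (pd i f) :=
  (hf.fderiv_right (by simp)).clm_apply contDiff_const

lemma lap_pd (f : E3 → ℝ) (x : E3) : lap f x = ∑ i : Fin 3, pd i (pd i f) x := rfl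

lemma Bp_pd (f g : E3 → ℝ) (x : E3) : Bp f g x = ∑ i : Fin 3, pd i f x * pd i g x := by
  have key : ∀ (F : E3 → ℝ) (i : Fin 3),
      (gradient F x) i = pd i F x := by
    intro F i
    have h1 : (inner ℝ (gradient F x) (EuclideanSpace.single i (1:ℝ)) : ℝ)
        = fderiv ℝ F x (EuclideanSpace.single i 1) :=
      InnerProductSpace.toDual_symm_apply
    rwa [EuclideanSpace.inner_single_right, starRingEnd_apply, star_trivial, one_mul] at h1
  simp only [Bp, PiLp.inner_apply, RCLike.inner_apply, starRingEnd_apply, star_trivial, key, mul_comm]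

lemma pd_add {f g : E3 → ℝ} (hf : ContDiff ℝ (⊤ : ℕ∞) f) (hg : ContDiff ℝ (⊤ : ℕ∞) g)
    (i : Fin 3) (x : E3) :
    pd i (fun y => f y + g y) x = pd i f x + pd i g x := by
  simp only [pd]; rw [fderiv_fun_add (dAt hf x) (dAt hg x)]; simp

lemma pd_sub {f g : E3 → ℝ} (hf : ContDiff ℝ (⊤ : ℕ∞) f) (hg : ContDiff ℝ (⊤ : ℕ∞) g)
    (i : Fin 3) (x : E3) :
    pd i (fun y => f y - g y) x = pd i f x - pd i g x := by
  simp only [pd]; rw [fderiv_fun_sub (dAt hf x) (dAt hg x)]; simp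

lemma pd_cmul (c : ℝ) {f : E3 → ℝ} (hf : ContDiff ℝ (⊤ : ℕ∞) f) (i : Fin 3) (x : E3) :
    pd i (fun y => c * f y) x = c * pd i f x := by
  simp only [pd]; rw [fderiv_const_mul (dAt hf x)]; simp

lemma pd_mul {f g : E3 → ℝ} (hf : ContDiff ℝ (⊤ : ℕ∞) f) (hg : ContDiff ℝ (⊤ : ℕ∞) g)
    (i : Fin 3) (x : E3) :
    pd i (fun y => f y * g y) x = f x * pd i g x + g x * pd i f x := by
  simp only [pd]; rw [fderiv_fun_mul (dAt hf x) (dAt hg x)]; simp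

lemma pd_exp {h : E3 → ℝ} (hh : ContDiff ℝ (⊤ : ℕ∞) h) (i : Fin 3) (x : E3) :
    pd i (fun y => Real.exp (h y)) x = Real.exp (h x) * pd i h x := by
  simp only [pd]; rw [fderiv_exp (dAt hh x)]; simp

lemma smooth_lap {f : E3 → ℝ} (hf : ContDiff ℝ (⊤ : ℕ∞) f) : ContDiff ℝ (⊤ : ℕ∞) (lap f) := by
  have : lap f = fun x => ∑ i : Fin 3, pd i (pd i f) x := rfl
  rw [this]
  exact ContDiff.sum fun i _ => smooth_pd (smooth_pd hf i) i

lemma smooth_Bp {f g : E3 → ℝ} (hf : ContDiff ℝ (⊤ : ℕ∞) f) (hg : ContDiff ℝ (⊤ : ℕ∞) g) :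
    ContDiff ℝ (⊤ : ℕ∞) (Bp f g) := by
  have : Bp f g = fun x => ∑ i : Fin 3, pd i f x * pd i g x := funext fun x => Bp_pd f g x
  rw [this]
  exact ContDiff.sum fun i _ => (smooth_pd hf i).mul (smooth_pd hg i)

lemma Bp_symm (f g : E3 → ℝ) (x : E3) : Bp f g x = Bp g f x := by
  simp only [Bp]; exact real_inner_comm _ _

-- mid level
lemma lap_add {f g : E3 → ℝ} (hf : ContDiff ℝ (⊤ : ℕ∞) f) (hg : ContDiff ℝ (⊤ : ℕ∞) g) (x : E3) :
    lap (fun y => f y + g y) x = lap f x + lap g x := by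
  simp only [lap_pd, ← Finset.sum_add_distrib]
  refine Finset.sum_congr rfl fun i _ => ?_
  have e1 : pd i (fun y => f y + g y) = fun y => pd i f y + pd i g y :=
    funext fun y => pd_add hf hg i y
  rw [e1, pd_add (smooth_pd hf i) (smooth_pd hg i)]

lemma lap_sub {f g : E3 → ℝ} (hf : ContDiff ℝ (⊤ : ℕ∞) f) (hg : ContDiff ℝ (⊤ : ℕ∞) g) (x : E3) :
    lap (fun y => f y - g y) x = lap f x - lap g x := by
  simp only [lap_pd, ← Finset.sum_sub_distrib]
  refine Finset.sum_congr rfl fun i _ => ?_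
  have e1 : pd i (fun y => f y - g y) = fun y => pd i f y - pd i g y :=
    funext fun y => pd_sub hf hg i y
  rw [e1, pd_sub (smooth_pd hf i) (smooth_pd hg i)]

lemma lap_cmul (c : ℝ) {f : E3 → ℝ} (hf : ContDiff ℝ (⊤ : ℕ∞) f) (x : E3) :
    lap (fun y => c * f y) x = c * lap f x := by
  simp only [lap_pd, Finset.mul_sum]
  refine Finset.sum_congr rfl fun i _ => ?_
  have e1 : pd i (fun y => c * f y) = fun y => c * pd i f y :=
    funext fun y => pd_cmul c hf i y
  rw [e1, pd_cmul c (smooth_pd hf i)]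

lemma lap_mul {f g : E3 → ℝ} (hf : ContDiff ℝ (⊤ : ℕ∞) f) (hg : ContDiff ℝ (⊤ : ℕ∞) g) (x : E3) :
    lap (fun y => f y * g y) x = f x * lap g x + 2 * Bp f g x + g x * lap f x := by
  have key : ∀ i : Fin 3, pd i (pd i (fun y => f y * g y)) x
      = (f x * pd i (pd i g) x + 2 * (pd i f x * pd i g x)) + g x * pd i (pd i f) x := by
    intro i
    have e1 : pd i (fun y => f y * g y) = fun y => f y * pd i g y + g y * pd i f y :=
      funext fun y => pd_mul hf hg i y
    rw [e1, pd_add (hf.mul (smooth_pd hg i)) (hg.mul (smooth_pd hf i)),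
        pd_mul hf (smooth_pd hg i), pd_mul hg (smooth_pd hf i)]
    ring
  simp only [lap_pd, Bp_pd, Finset.mul_sum, ← Finset.sum_add_distrib]
  exact Finset.sum_congr rfl fun i _ => key i

lemma lap_exp {h : E3 → ℝ} (hh : ContDiff ℝ (⊤ : ℕ∞) h) (x : E3) :
    lap (fun y => Real.exp (h y)) x
      = Real.exp (h x) * lap h x + Real.exp (h x) * Bp h h x := by
  have key : ∀ i : Fin 3, pd i (pd i (fun y => Real.exp (h y))) x
      = Real.exp (h x) * pd i (pd i h) x + Real.exp (h x) * (pd i h x * pd i h x) := by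
    intro i
    have e1 : pd i (fun y => Real.exp (h y)) = fun y => Real.exp (h y) * pd i h y :=
      funext fun y => pd_exp hh i y
    rw [e1, pd_mul hh.exp (smooth_pd hh i), pd_exp hh]
    ring
  simp only [lap_pd, Bp_pd, Finset.mul_sum, ← Finset.sum_add_distrib]
  exact Finset.sum_congr rfl fun i _ => key i

lemma Bp_add_right {f g k : E3 → ℝ} (hg : ContDiff ℝ (⊤ : ℕ∞) g) (hk : ContDiff ℝ (⊤ : ℕ∞) k)
    (x : E3) : Bp f (fun y => g y + k y) x = Bp f g x + Bp f k x := by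
  simp only [Bp_pd, ← Finset.sum_add_distrib]
  refine Finset.sum_congr rfl fun i _ => ?_
  rw [pd_add hg hk]; ring

lemma Bp_sub_right {f g k : E3 → ℝ} (hg : ContDiff ℝ (⊤ : ℕ∞) g) (hk : ContDiff ℝ (⊤ : ℕ∞) k)
    (x : E3) : Bp f (fun y => g y - k y) x = Bp f g x - Bp f k x := by
  simp only [Bp_pd, ← Finset.sum_sub_distrib]
  refine Finset.sum_congr rfl fun i _ => ?_
  rw [pd_sub hg hk]; ring

lemma Bp_cmul_right (c : ℝ) {f k : E3 → ℝ} (hk : ContDiff ℝ (⊤ : ℕ∞) k) (x : E3) :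
    Bp f (fun y => c * k y) x = c * Bp f k x := by
  simp only [Bp_pd, Finset.mul_sum]
  refine Finset.sum_congr rfl fun i _ => ?_
  rw [pd_cmul c hk]; ring

lemma Bp_mul_right {f g k : E3 → ℝ} (hg : ContDiff ℝ (⊤ : ℕ∞) g) (hk : ContDiff ℝ (⊤ : ℕ∞) k)
    (x : E3) : Bp f (fun y => g y * k y) x = g x * Bp f k x + k x * Bp f g x := by
  simp only [Bp_pd, Finset.mul_sum, ← Finset.sum_add_distrib]
  refine Finset.sum_congr rfl fun i _ => ?_
  rw [pd_mul hg hk]; ring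

lemma Bp_exp_left {h : E3 → ℝ} (hh : ContDiff ℝ (⊤ : ℕ∞) h) (k : E3 → ℝ) (x : E3) :
    Bp (fun y => Real.exp (h y)) k x = Real.exp (h x) * Bp h k x := by
  simp only [Bp_pd, Finset.mul_sum]
  refine Finset.sum_congr rfl fun i _ => ?_
  rw [pd_exp hh]; ring

lemma Bp_exp_right {h : E3 → ℝ} (hh : ContDiff ℝ (⊤ : ℕ∞) h) (k : E3 → ℝ) (x : E3) :
    Bp k (fun y => Real.exp (h y)) x = Real.exp (h x) * Bp k h x := by
  simp only [Bp_pd, Finset.mul_sum]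
  refine Finset.sum_congr rfl fun i _ => ?_
  rw [pd_exp hh]; ring


end PB5

/-- Proposition B.5 -/
theorem Lop_exp_mul (ε : ℝ) (hε0 : 0 ≤ ε) (hε1 : ε ≤ 1) (h g : E3 → ℝ)
    (hh : ContDiff ℝ (⊤ : ℕ∞) h) (hg : ContDiff ℝ (⊤ : ℕ∞) g) (x : E3) :
    Lop ε (fun y => Real.exp (h y) * g y) x =
      Lop ε h x * (Real.exp (h x) * g x) + Real.exp (h x) * Lop ε g x
        - Fop ε h x * (Real.exp (h x) * g x)
        + 2 * Gop ε h (fun y => Real.exp (h y) * g y) x := by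
  have hu : ContDiff ℝ (⊤ : ℕ∞) (fun y => Real.exp (h y)) := hh.exp
  have hv : ContDiff ℝ (⊤ : ℕ∞) (fun y => Real.exp (h y) * g y) := hu.mul hg
  have hlh := PB5.smooth_lap hh
  have hlg := PB5.smooth_lap hg
  have hlv := PB5.smooth_lap hv
  have hBhh := PB5.smooth_Bp hh hh
  have hBhv := PB5.smooth_Bp hh hv
  have hA : ∀ z : E3, lap (fun y => Real.exp (h y) * g y) z
      = lap h z * (Real.exp (h z) * g z) + Real.exp (h z) * lap g z
        - Bp h h z * (Real.exp (h z) * g z) + 2 * Bp h (fun y => Real.exp (h y) * g y) z := by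
    intro z
    have e1 : lap (fun y => Real.exp (h y) * g y) z
        = Real.exp (h z) * lap g z + 2 * Bp (fun y => Real.exp (h y)) g z + g z * lap (fun y => Real.exp (h y)) z :=
      PB5.lap_mul hu hg z
    have e2 : Bp (fun y => Real.exp (h y)) g z = Real.exp (h z) * Bp h g z := PB5.Bp_exp_left hh g z
    have e3 : lap (fun y => Real.exp (h y)) z = Real.exp (h z) * lap h z + Real.exp (h z) * Bp h h z :=
      PB5.lap_exp hh z
    have e4 : Bp h (fun y => Real.exp (h y) * g y) z = Real.exp (h z) * Bp h g z + g z * Bp h (fun y => Real.exp (h y)) z :=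
      PB5.Bp_mul_right hu hg z
    have e5 : Bp h (fun y => Real.exp (h y)) z = Real.exp (h z) * Bp h h z := PB5.Bp_exp_right hh h z
    linear_combination e1 + 2 * e2 + g z * e3 - 2 * e4 - 2 * g z * e5
  have c1 : lap (lap (fun y => Real.exp (h y) * g y)) x = lap (fun z => lap h z * (Real.exp (h z) * g z) + Real.exp (h z) * lap g z - Bp h h z * (Real.exp (h z) * g z) + 2 * Bp h (fun y => Real.exp (h y) * g y) z) x :=
    congrFun (congrArg lap (funext hA)) x
  have c2 : lap (fun z => lap h z * (Real.exp (h z) * g z) + Real.exp (h z) * lap g z - Bp h h z * (Real.exp (h z) * g z) + 2 * Bp h (fun y => Real.exp (h y) * g y) z) x = lap (fun z => lap h z * (Real.exp (h z) * g z) + Real.exp (h z) * lap g z - Bp h h z * (Real.exp (h z) * g z)) x + lap (fun z => 2 * Bp h (fun y => Real.exp (h y) * g y) z) x :=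
    PB5.lap_add ((((hlh.mul hv).add (hu.mul hlg)).sub (hBhh.mul hv))) (contDiff_const.mul hBhv) x
  have c3 : lap (fun z => lap h z * (Real.exp (h z) * g z) + Real.exp (h z) * lap g z - Bp h h z * (Real.exp (h z) * g z)) x = lap (fun z => lap h z * (Real.exp (h z) * g z) + Real.exp (h z) * lap g z) x - lap (fun z => Bp h h z * (Real.exp (h z) * g z)) x :=
    PB5.lap_sub ((hlh.mul hv).add (hu.mul hlg)) (hBhh.mul hv) x
  have c4 : lap (fun z => lap h z * (Real.exp (h z) * g z) + Real.exp (h z) * lap g z) x = lap (fun z => lap h z * (Real.exp (h z) * g z)) x + lap (fun z => Real.exp (h z) * lap g z) x :=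
    PB5.lap_add (hlh.mul hv) (hu.mul hlg) x
  have c5 : lap (fun z => lap h z * (Real.exp (h z) * g z)) x
      = lap h x * lap (fun y => Real.exp (h y) * g y) x + 2 * Bp (lap h) (fun y => Real.exp (h y) * g y) x + Real.exp (h x) * g x * lap (lap h) x :=
    PB5.lap_mul hlh hv x
  have c6 : lap (fun z => Real.exp (h z) * lap g z) x
      = Real.exp (h x) * lap (lap g) x + 2 * Bp (fun y => Real.exp (h y)) (lap g) x + lap g x * lap (fun y => Real.exp (h y)) x :=
    PB5.lap_mul hu hlg x
  have c7 : Bp (fun y => Real.exp (h y)) (lap g) x = Real.exp (h x) * Bp h (lap g) x := PB5.Bp_exp_left hh (lap g) x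
  have c8 : lap (fun y => Real.exp (h y)) x = Real.exp (h x) * lap h x + Real.exp (h x) * Bp h h x := PB5.lap_exp hh x
  have c9 : lap (fun z => Bp h h z * (Real.exp (h z) * g z)) x
      = Bp h h x * lap (fun y => Real.exp (h y) * g y) x + 2 * Bp (Bp h h) (fun y => Real.exp (h y) * g y) x + Real.exp (h x) * g x * lap (Bp h h) x :=
    PB5.lap_mul hBhh hv x
  have c10 : lap (fun z => 2 * Bp h (fun y => Real.exp (h y) * g y) z) x = 2 * lap (Bp h (fun y => Real.exp (h y) * g y)) x := PB5.lap_cmul 2 hBhv x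
  have E2 : lap (lap (fun y => Real.exp (h y) * g y)) x
      = lap h x * lap (fun y => Real.exp (h y) * g y) x + 2 * Bp (lap h) (fun y => Real.exp (h y) * g y) x + Real.exp (h x) * g x * lap (lap h) x
        + (Real.exp (h x) * lap (lap g) x + 2 * (Real.exp (h x) * Bp h (lap g) x)
            + lap g x * (Real.exp (h x) * lap h x + Real.exp (h x) * Bp h h x))
        - (Bp h h x * lap (fun y => Real.exp (h y) * g y) x + 2 * Bp (Bp h h) (fun y => Real.exp (h y) * g y) x + Real.exp (h x) * g x * lap (Bp h h) x)
        + 2 * lap (Bp h (fun y => Real.exp (h y) * g y)) x := by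
    rw [c1, c2, c3, c4, c5, c6, c7, c8, c9, c10]
  have E3 : Bp h (fun z => Real.exp (h z) * lap g z) x
      = Real.exp (h x) * Bp h (lap g) x + lap g x * (Real.exp (h x) * Bp h h x) := by
    have t1 : Bp h (fun z => Real.exp (h z) * lap g z) x = Real.exp (h x) * Bp h (lap g) x + lap g x * Bp h (fun y => Real.exp (h y)) x :=
      PB5.Bp_mul_right hu hlg x
    have t2 : Bp h (fun y => Real.exp (h y)) x = Real.exp (h x) * Bp h h x := PB5.Bp_exp_right hh h x
    rw [t1, t2]
  have hWfun : (fun z => Real.exp (h z) * lap g z) = (fun z => lap (fun y => Real.exp (h y) * g y) z - lap h z * (Real.exp (h z) * g z) + Bp h h z * (Real.exp (h z) * g z) - 2 * Bp h (fun y => Real.exp (h y) * g y) z) :=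
    funext fun z => by linarith [hA z]
  have d1 : Bp h (fun z => Real.exp (h z) * lap g z) x = Bp h (fun z => lap (fun y => Real.exp (h y) * g y) z - lap h z * (Real.exp (h z) * g z) + Bp h h z * (Real.exp (h z) * g z) - 2 * Bp h (fun y => Real.exp (h y) * g y) z) x :=
    congrFun (congrArg (Bp h) hWfun) x
  have d2 : Bp h (fun z => lap (fun y => Real.exp (h y) * g y) z - lap h z * (Real.exp (h z) * g z) + Bp h h z * (Real.exp (h z) * g z) - 2 * Bp h (fun y => Real.exp (h y) * g y) z) x = Bp h (fun z => lap (fun y => Real.exp (h y) * g y) z - lap h z * (Real.exp (h z) * g z) + Bp h h z * (Real.exp (h z) * g z)) x - Bp h (fun z => 2 * Bp h (fun y => Real.exp (h y) * g y) z) x :=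
    PB5.Bp_sub_right ((hlv.sub (hlh.mul hv)).add (hBhh.mul hv)) (contDiff_const.mul hBhv) x
  have d3 : Bp h (fun z => lap (fun y => Real.exp (h y) * g y) z - lap h z * (Real.exp (h z) * g z) + Bp h h z * (Real.exp (h z) * g z)) x = Bp h (fun z => lap (fun y => Real.exp (h y) * g y) z - lap h z * (Real.exp (h z) * g z)) x + Bp h (fun z => Bp h h z * (Real.exp (h z) * g z)) x :=
    PB5.Bp_add_right (hlv.sub (hlh.mul hv)) (hBhh.mul hv) x
  have d4 : Bp h (fun z => lap (fun y => Real.exp (h y) * g y) z - lap h z * (Real.exp (h z) * g z)) x = Bp h (lap (fun y => Real.exp (h y) * g y)) x - Bp h (fun z => lap h z * (Real.exp (h z) * g z)) x :=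
    PB5.Bp_sub_right hlv (hlh.mul hv) x
  have d5 : Bp h (fun z => lap h z * (Real.exp (h z) * g z)) x = lap h x * Bp h (fun y => Real.exp (h y) * g y) x + Real.exp (h x) * g x * Bp h (lap h) x :=
    PB5.Bp_mul_right hlh hv x
  have d6 : Bp h (fun z => Bp h h z * (Real.exp (h z) * g z)) x = Bp h h x * Bp h (fun y => Real.exp (h y) * g y) x + Real.exp (h x) * g x * Bp h (Bp h h) x :=
    PB5.Bp_mul_right hBhh hv x
  have d7 : Bp h (fun z => 2 * Bp h (fun y => Real.exp (h y) * g y) z) x = 2 * Bp h (Bp h (fun y => Real.exp (h y) * g y)) x := PB5.Bp_cmul_right 2 hBhv x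
  have E4 : Bp h (fun z => Real.exp (h z) * lap g z) x
      = Bp h (lap (fun y => Real.exp (h y) * g y)) x - (lap h x * Bp h (fun y => Real.exp (h y) * g y) x + Real.exp (h x) * g x * Bp h (lap h) x)
        + (Bp h h x * Bp h (fun y => Real.exp (h y) * g y) x + Real.exp (h x) * g x * Bp h (Bp h h) x)
        - 2 * Bp h (Bp h (fun y => Real.exp (h y) * g y)) x := by
    rw [d1, d2, d3, d4, d5, d6, d7]
  have hs1 : Bp (fun y => Real.exp (h y) * g y) h = Bp h (fun y => Real.exp (h y) * g y) := funext fun z => PB5.Bp_symm _ _ z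
  have hs2 : Bp (Bp h (fun y => Real.exp (h y) * g y)) h = Bp h (Bp h (fun y => Real.exp (h y) * g y)) := funext fun z => PB5.Bp_symm _ _ z
  have hs3 : Bp (lap h) h = Bp h (lap h) := funext fun z => PB5.Bp_symm _ _ z
  have hs4 : Bp (Bp h h) h = Bp h (Bp h h) := funext fun z => PB5.Bp_symm _ _ z
  simp only [Lop, Fop, Gop, Btil, Tp]
  rw [hs1, hs2, hs3, hs4]
  linear_combination (1 + ε * (lap h x - Bp h h x)) * (hA x) - ε * E2 + 2 * ε * E3 - 2 * ε * E4
end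
end

section
/- Let 0 ≤ ε ≤ 1 and let h, g : E → ℝ be smooth. Then pointwise on E one has L_ε(e^h·g) = e^h·{(L_ε h)·g + L_ε g + 2·A¹_ε(h,g) + A²_ε(h)·g + 2·A³_ε(h,g)}. -/
open Real

noncomputable section

/-! ### Auxiliary infrastructure -/

/-- The `i`-th partial derivative. -/
def pdf (i : Fin 3) (f : E3 → ℝ) : E3 → ℝ := fun x => fderiv ℝ f x (EuclideanSpace.single i 1)

lemma pdf_contDiff {f : E3 → ℝ} (hf : ContDiff ℝ (⊤ : ℕ∞) f) (i : Fin 3) :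
    ContDiff ℝ (⊤ : ℕ∞) (pdf i f) :=
  (hf.fderiv_right (m := ((⊤ : ℕ∞) : WithTop ℕ∞)) (by exact_mod_cast le_rfl)).clm_apply
    contDiff_const

lemma lap_eq (f : E3 → ℝ) (x : E3) : lap f x = ∑ i : Fin 3, pdf i (pdf i f) x := rfl

lemma lap_contDiff {f : E3 → ℝ} (hf : ContDiff ℝ (⊤ : ℕ∞) f) :
    ContDiff ℝ (⊤ : ℕ∞) (lap f) := by
  have : lap f = fun x => ∑ i : Fin 3, pdf i (pdf i f) x := rfl
  rw [this]
  exact ContDiff.sum fun i _ => pdf_contDiff (pdf_contDiff hf i) i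

lemma Bp_eq (f g : E3 → ℝ) (x : E3) : Bp f g x = ∑ i : Fin 3, pdf i f x * pdf i g x := by
  have hcoord : ∀ (u : E3 → ℝ) (i : Fin 3), gradient u x i = pdf i u x := by
    intro u i
    have : (gradient u x) i = @inner ℝ _ _ (gradient u x) (EuclideanSpace.single i 1) := by
      rw [EuclideanSpace.inner_single_right]; simp
    rw [this]
    show (inner ℝ (gradient u x) (EuclideanSpace.single i 1) : ℝ) = fderiv ℝ u x _
    rw [gradient]
    rw [← InnerProductSpace.toDual_apply_apply, LinearIsometryEquiv.apply_symm_apply]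
  simp only [Bp, PiLp.inner_apply, RCLike.inner_apply, starRingEnd_apply, star_trivial]
  exact Finset.sum_congr rfl fun i _ => by rw [hcoord f i, hcoord g i, mul_comm]

lemma Bp_contDiff {f g : E3 → ℝ} (hf : ContDiff ℝ (⊤ : ℕ∞) f) (hg : ContDiff ℝ (⊤ : ℕ∞) g) :
    ContDiff ℝ (⊤ : ℕ∞) (Bp f g) := by
  have : Bp f g = fun x => ∑ i : Fin 3, pdf i f x * pdf i g x := funext fun x => Bp_eq f g x
  rw [this]
  exact ContDiff.sum fun i _ => (pdf_contDiff hf i).mul (pdf_contDiff hg i)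

lemma Bp_symm (f g : E3 → ℝ) : Bp f g = Bp g f :=
  funext fun x => real_inner_comm _ _

lemma pdf_add {f g : E3 → ℝ} (hf : ContDiff ℝ (⊤ : ℕ∞) f) (hg : ContDiff ℝ (⊤ : ℕ∞) g)
    (i : Fin 3) (x : E3) : pdf i (fun y => f y + g y) x = pdf i f x + pdf i g x := by
  have := fderiv_fun_add (𝕜 := ℝ) (hf.differentiable (by simp) x)
    (hg.differentiable (by simp) x)
  simp only [pdf, this]; rfl

lemma pdf_mul {f g : E3 → ℝ} (hf : ContDiff ℝ (⊤ : ℕ∞) f) (hg : ContDiff ℝ (⊤ : ℕ∞) g)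
    (i : Fin 3) (x : E3) : pdf i (fun y => f y * g y) x = pdf i f x * g x + f x * pdf i g x := by
  have := fderiv_fun_mul (𝕜 := ℝ) (hf.differentiable (by simp) x)
    (hg.differentiable (by simp) x)
  simp only [pdf, this, ContinuousLinearMap.add_apply, ContinuousLinearMap.smul_apply,
    smul_eq_mul]
  ring

lemma pdf_const_mul {f : E3 → ℝ} (hf : ContDiff ℝ (⊤ : ℕ∞) f) (c : ℝ)
    (i : Fin 3) (x : E3) : pdf i (fun y => c * f y) x = c * pdf i f x := by
  have := fderiv_const_mul (𝕜 := ℝ) (hf.differentiable (by simp) x) c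
  simp only [pdf, this]; rfl

lemma pdf_exp {h : E3 → ℝ} (hh : ContDiff ℝ (⊤ : ℕ∞) h) (i : Fin 3) (x : E3) :
    pdf i (fun y => Real.exp (h y)) x = Real.exp (h x) * pdf i h x := by
  have := fderiv_exp (hh.differentiable (by simp) x)
  simp only [pdf, this, ContinuousLinearMap.smul_apply, smul_eq_mul]

lemma lap_add {f g : E3 → ℝ} (hf : ContDiff ℝ (⊤ : ℕ∞) f) (hg : ContDiff ℝ (⊤ : ℕ∞) g)
    (x : E3) : lap (fun y => f y + g y) x = lap f x + lap g x := by
  simp only [lap_eq, ← Finset.sum_add_distrib]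
  refine Finset.sum_congr rfl fun i _ => ?_
  have h1 : pdf i (fun y => f y + g y) = fun y => pdf i f y + pdf i g y :=
    funext fun y => pdf_add hf hg i y
  rw [h1, pdf_add (pdf_contDiff hf i) (pdf_contDiff hg i) i x]

lemma lap_const_mul {f : E3 → ℝ} (hf : ContDiff ℝ (⊤ : ℕ∞) f) (c : ℝ) (x : E3) :
    lap (fun y => c * f y) x = c * lap f x := by
  simp only [lap_eq, Finset.mul_sum]
  refine Finset.sum_congr rfl fun i _ => ?_
  have h1 : pdf i (fun y => c * f y) = fun y => c * pdf i f y :=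
    funext fun y => pdf_const_mul hf c i y
  rw [h1, pdf_const_mul (pdf_contDiff hf i) c i x]

lemma lap_mul {f g : E3 → ℝ} (hf : ContDiff ℝ (⊤ : ℕ∞) f) (hg : ContDiff ℝ (⊤ : ℕ∞) g)
    (x : E3) :
    lap (fun y => f y * g y) x = lap f x * g x + f x * lap g x + 2 * Bp f g x := by
  have key : ∀ i : Fin 3, pdf i (pdf i (fun y => f y * g y)) x
      = pdf i (pdf i f) x * g x + f x * pdf i (pdf i g) x + 2 * (pdf i f x * pdf i g x) := by
    intro i
    have h1 : pdf i (fun y => f y * g y) = fun y => pdf i f y * g y + f y * pdf i g y :=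
      funext fun y => pdf_mul hf hg i y
    rw [h1, pdf_add ((pdf_contDiff hf i).mul hg) (hf.mul (pdf_contDiff hg i)) i x,
      pdf_mul (pdf_contDiff hf i) hg i x, pdf_mul hf (pdf_contDiff hg i) i x]
    ring
  simp only [lap_eq, Bp_eq, key, Finset.sum_add_distrib, ← Finset.sum_mul, ← Finset.mul_sum]

lemma lap_exp {h : E3 → ℝ} (hh : ContDiff ℝ (⊤ : ℕ∞) h) (x : E3) :
    lap (fun y => Real.exp (h y)) x = Real.exp (h x) * (lap h x + Bp h h x) := by
  have key : ∀ i : Fin 3, pdf i (pdf i (fun y => Real.exp (h y))) x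
      = Real.exp (h x) * (pdf i (pdf i h) x + pdf i h x * pdf i h x) := by
    intro i
    have h1 : pdf i (fun y => Real.exp (h y)) = fun y => Real.exp (h y) * pdf i h y :=
      funext fun y => pdf_exp hh i y
    rw [h1, pdf_mul hh.exp (pdf_contDiff hh i) i x, pdf_exp hh i x]
    ring
  simp only [lap_eq, Bp_eq, key, ← Finset.mul_sum, Finset.sum_add_distrib]

lemma Bp_add_right {f u v : E3 → ℝ} (hu : ContDiff ℝ (⊤ : ℕ∞) u) (hv : ContDiff ℝ (⊤ : ℕ∞) v)
    (x : E3) : Bp f (fun y => u y + v y) x = Bp f u x + Bp f v x := by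
  simp only [Bp_eq, ← Finset.sum_add_distrib]
  exact Finset.sum_congr rfl fun i _ => by rw [pdf_add hu hv i x]; ring

lemma Bp_const_mul_right {f u : E3 → ℝ} (hu : ContDiff ℝ (⊤ : ℕ∞) u) (c : ℝ)
    (x : E3) : Bp f (fun y => c * u y) x = c * Bp f u x := by
  simp only [Bp_eq, Finset.mul_sum]
  exact Finset.sum_congr rfl fun i _ => by rw [pdf_const_mul hu c i x]; ring

lemma Bp_mul_right {f u v : E3 → ℝ} (hu : ContDiff ℝ (⊤ : ℕ∞) u) (hv : ContDiff ℝ (⊤ : ℕ∞) v)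
    (x : E3) : Bp f (fun y => u y * v y) x = Bp f u x * v x + u x * Bp f v x := by
  have key : ∀ i : Fin 3, pdf i f x * pdf i (fun y => u y * v y) x
      = pdf i f x * pdf i u x * v x + u x * (pdf i f x * pdf i v x) := by
    intro i; rw [pdf_mul hu hv i x]; ring
  simp only [Bp_eq, key, Finset.sum_add_distrib, ← Finset.sum_mul, ← Finset.mul_sum]

lemma Bp_exp_left {h g : E3 → ℝ} (hh : ContDiff ℝ (⊤ : ℕ∞) h) (x : E3) :
    Bp (fun y => Real.exp (h y)) g x = Real.exp (h x) * Bp h g x := by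
  have key : ∀ i : Fin 3, pdf i (fun y => Real.exp (h y)) x * pdf i g x
      = Real.exp (h x) * (pdf i h x * pdf i g x) := by
    intro i; rw [pdf_exp hh i x]; ring
  simp only [Bp_eq, key, ← Finset.mul_sum]

lemma lap_exp_mul {h g : E3 → ℝ} (hh : ContDiff ℝ (⊤ : ℕ∞) h) (hg : ContDiff ℝ (⊤ : ℕ∞) g)
    (x : E3) :
    lap (fun y => Real.exp (h y) * g y) x =
      Real.exp (h x) * (lap h x * g x + lap g x + 2 * Bp h g x + Bp h h x * g x) := by
  have e1 := lap_mul hh.exp hg x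
  have e2 := lap_exp hh x
  have e3 := Bp_exp_left (g := g) hh x
  rw [e1, e2, e3]
  ring

/-- `L_ε(e^h·g) = e^h·{(L_ε h)·g + L_ε g + 2·A¹_ε(h,g) + A²_ε(h)·g + 2·A³_ε(h,g)}`. -/
theorem Lop_exp_mul_expand (ε : ℝ) (hε0 : 0 ≤ ε) (hε1 : ε ≤ 1) (h g : E3 → ℝ)
    (hh : ContDiff ℝ (⊤ : ℕ∞) h) (hg : ContDiff ℝ (⊤ : ℕ∞) g) (x : E3) :
    Lop ε (fun y => Real.exp (h y) * g y) x =
      Real.exp (h x) *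
        (Lop ε h x * g x + Lop ε g x + 2 * A1 ε h g x + A2 ε h x * g x
          + 2 * A3 ε h g x) := by
  have hlh := lap_contDiff hh
  have hlg := lap_contDiff hg
  have hBhg := Bp_contDiff hh hg
  have hBhh := Bp_contDiff hh hh
  have hG : ContDiff ℝ (⊤ : ℕ∞) (fun y => lap h y * g y + lap g y + 2 * Bp h g y
      + Bp h h y * g y) :=
    (((hlh.mul hg).add hlg).add (contDiff_const.mul hBhg)).add (hBhh.mul hg)
  -- first Laplacian
  have e1 : lap (fun y => Real.exp (h y) * g y) x =
      Real.exp (h x) * (lap h x * g x + lap g x + 2 * Bp h g x + Bp h h x * g x) :=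
    lap_exp_mul hh hg x
  have hfun : lap (fun y => Real.exp (h y) * g y) =
      fun y => Real.exp (h y) * (lap h y * g y + lap g y + 2 * Bp h g y + Bp h h y * g y) :=
    funext fun y => lap_exp_mul hh hg y
  -- second Laplacian
  have e2 : lap (lap (fun y => Real.exp (h y) * g y)) x =
      Real.exp (h x) * (lap h x * (lap h x * g x + lap g x + 2 * Bp h g x + Bp h h x * g x)
        + lap (fun y => lap h y * g y + lap g y + 2 * Bp h g y + Bp h h y * g y) x
        + 2 * Bp h (fun y => lap h y * g y + lap g y + 2 * Bp h g y + Bp h h y * g y) x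
        + Bp h h x * (lap h x * g x + lap g x + 2 * Bp h g x + Bp h h x * g x)) := by
    rw [hfun]; exact lap_exp_mul hh hG x
  -- expand lap G
  have a1 : lap (fun y => lap h y * g y + lap g y + 2 * Bp h g y + Bp h h y * g y) x =
      lap (fun y => lap h y * g y + lap g y + 2 * Bp h g y) x
        + lap (fun y => Bp h h y * g y) x :=
    lap_add (((hlh.mul hg).add hlg).add (contDiff_const.mul hBhg)) (hBhh.mul hg) x
  have a2 : lap (fun y => lap h y * g y + lap g y + 2 * Bp h g y) x =
      lap (fun y => lap h y * g y + lap g y) x + lap (fun y => 2 * Bp h g y) x :=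
    lap_add ((hlh.mul hg).add hlg) (contDiff_const.mul hBhg) x
  have a3 : lap (fun y => lap h y * g y + lap g y) x =
      lap (fun y => lap h y * g y) x + lap (lap g) x :=
    lap_add (hlh.mul hg) hlg x
  have a4 : lap (fun y => lap h y * g y) x =
      lap (lap h) x * g x + lap h x * lap g x + 2 * Bp (lap h) g x :=
    lap_mul hlh hg x
  have a5 : lap (fun y => 2 * Bp h g y) x = 2 * lap (Bp h g) x :=
    lap_const_mul hBhg 2 x
  have a6 : lap (fun y => Bp h h y * g y) x =
      lap (Bp h h) x * g x + Bp h h x * lap g x + 2 * Bp (Bp h h) g x :=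
    lap_mul hBhh hg x
  -- expand Bp h G
  have b1 : Bp h (fun y => lap h y * g y + lap g y + 2 * Bp h g y + Bp h h y * g y) x =
      Bp h (fun y => lap h y * g y + lap g y + 2 * Bp h g y) x
        + Bp h (fun y => Bp h h y * g y) x :=
    Bp_add_right (((hlh.mul hg).add hlg).add (contDiff_const.mul hBhg)) (hBhh.mul hg) x
  have b2 : Bp h (fun y => lap h y * g y + lap g y + 2 * Bp h g y) x =
      Bp h (fun y => lap h y * g y + lap g y) x + Bp h (fun y => 2 * Bp h g y) x :=
    Bp_add_right ((hlh.mul hg).add hlg) (contDiff_const.mul hBhg) x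
  have b3 : Bp h (fun y => lap h y * g y + lap g y) x =
      Bp h (fun y => lap h y * g y) x + Bp h (lap g) x :=
    Bp_add_right (hlh.mul hg) hlg x
  have b4 : Bp h (fun y => lap h y * g y) x =
      Bp h (lap h) x * g x + lap h x * Bp h g x :=
    Bp_mul_right hlh hg x
  have b5 : Bp h (fun y => 2 * Bp h g y) x = 2 * Bp h (Bp h g) x :=
    Bp_const_mul_right hBhg 2 x
  have b6 : Bp h (fun y => Bp h h y * g y) x =
      Bp h (Bp h h) x * g x + Bp h h x * Bp h g x :=
    Bp_mul_right hBhh hg x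
  -- assemble
  simp only [Lop, A1, A2, A3, Tp, Btil]
  rw [e1, e2, a1, a2, a3, a4, a5, a6, b1, b2, b3, b4, b5, b6]
  rw [Bp_symm g h, Bp_symm (Bp h g) h, Bp_symm (Bp h h) h, Bp_symm (lap h) h]
  ring
end
end

section
/- Let a, b, c > 0 and t ∈ ℝ. Define H : ℝ × ℝ → ℝ by H(s₁,s₂) := ∫_ℝ 1_{u ≤ t}·e^{−(t−u)c}·1_{s₁ ≤ u}·e^{−(u−s₁)a}·1_{s₂ ≤ u}·e^{−(u−s₂)b} du. Then ∫_{ℝ²} H(s₁,s₂)² ds₁ ds₂ = 1/(4·a·b·c·(a+b+c)). In particular, taking a = α_ε(k₁), b = α_ε(k₂), c = α_ε(k₁+k₂) for k₁, k₂ ∈ ℤ³ and ε ∈ [0,1], the squared L² norm in (s₁,s₂) of the kernel H_t^{ε,⧓}(s₁,k₁,s₂,k₂) equals 1/(4·α_ε(k₁)·α_ε(k₂)·α_ε(k₁+k₂)·(α_ε(k₁)+α_ε(k₂)+α_ε(k₁+k₂))). -/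
open Real MeasureTheory

noncomputable section

/-- The lattice `ℤ³`. -/
abbrev Z3 := Fin 3 → ℤ

/-- Euclidean norm `|k|` of `k ∈ ℤ³`. -/
def knorm (k : Z3) : ℝ := Real.sqrt (∑ i, ((k i : ℝ)) ^ 2)

/-- `α_ε(k) = 4π²|k|² + 16π⁴ε|k|⁴ + 1`. -/
def alphaE (ε : ℝ) (k : Z3) : ℝ :=
  4 * π ^ 2 * (knorm k) ^ 2 + 16 * π ^ 4 * ε * (knorm k) ^ 4 + 1

/-- The abstract kernel `H(s₁,s₂)` built from rates `a, b, c` at time `t`. -/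
def Hker (a b c t : ℝ) (s₁ s₂ : ℝ) : ℝ :=
  ∫ u : ℝ, (if u ≤ t then Real.exp (-(t - u) * c) else 0) *
    (if s₁ ≤ u then Real.exp (-(u - s₁) * a) else 0) *
    (if s₂ ≤ u then Real.exp (-(u - s₂) * b) else 0)

/-- The kernel `H_t^{ε,⧓}(s₁,k₁,s₂,k₂)` of the stochastic object `⧓`. -/
def Hcup (ε t : ℝ) (k₁ k₂ : Z3) (s₁ s₂ : ℝ) : ℝ :=
  Hker (alphaE ε k₁) (alphaE ε k₂) (alphaE ε (k₁ + k₂)) t s₁ s₂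

open Set Filter Topology
open scoped ENNReal

lemma expInt {r : ℝ} (hr : 0 < r) (M : ℝ) :
    IntegrableOn (fun x : ℝ => Real.exp (r * x)) (Iic M) := by
  have hc : Continuous fun x : ℝ => Real.exp (r * x) :=
    Real.continuous_exp.comp (continuous_const.mul continuous_id)
  refine integrableOn_Iic_of_intervalIntegral_norm_bounded (Real.exp (r*M)/r) M
    (fun y => (hc.intervalIntegrable y M).1) tendsto_id ?_
  filter_upwards [Iic_mem_atBot M] with y (hy : y ≤ M)
  have h1 : ∀ x : ℝ, ‖Real.exp (r * x)‖ = Real.exp (r * x) :=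
    fun x => norm_of_nonneg (Real.exp_pos _).le
  simp_rw [h1]
  rw [intervalIntegral.integral_comp_mul_left (fun x => Real.exp x) hr.ne',
    integral_exp, smul_eq_mul, inv_mul_eq_div, div_le_div_iff_of_pos_right hr]
  have := (Real.exp_pos (r*y)).le
  linarith

lemma expIntegral {r : ℝ} (hr : 0 < r) (M : ℝ) :
    ∫ x in Iic M, Real.exp (r * x) = Real.exp (r * M) / r := by
  have hderiv : ∀ x ∈ Iic M, HasDerivAt (fun x : ℝ => Real.exp (r*x) / r)
      (Real.exp (r * x)) x := by
    intro x _
    have h := ((hasDerivAt_id x).const_mul r).exp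
    simpa [mul_div_assoc, mul_comm, hr.ne'] using h.div_const r
  have htend : Tendsto (fun x : ℝ => Real.exp (r*x) / r) atBot (𝓝 0) := by
    have h1 : Tendsto (fun x : ℝ => r * x) atBot atBot :=
      (tendsto_const_mul_atBot_of_pos hr).2 tendsto_id
    have := (Real.tendsto_exp_atBot.comp h1).div_const r
    simpa using this
  have := integral_Iic_of_hasDerivAt_of_tendsto' hderiv (expInt hr M) htend
  simpa using this

/-- The basic decaying-exponential profile. -/
def gR (r x : ℝ) : ℝ := if 0 ≤ x then Real.exp (-x * r) else 0

@[fun_prop]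
lemma measurable_gR (r : ℝ) : Measurable (gR r) := by
  unfold gR
  exact Measurable.ite (measurableSet_le measurable_const measurable_id)
    (Real.measurable_exp.comp (measurable_id.neg.mul_const r)) measurable_const

lemma gR_nonneg (r x : ℝ) : 0 ≤ gR r x := by
  unfold gR; split
  · exact (Real.exp_pos _).le
  · exact le_rfl

lemma gR_le_one {r : ℝ} (hr : 0 ≤ r) (x : ℝ) : gR r x ≤ 1 := by
  unfold gR; split
  · rename_i h
    rw [Real.exp_le_one_iff]
    have := mul_nonneg h hr
    nlinarith
  · norm_num

/-- `ℝ≥0∞`-valued version of `gR`. -/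
def gE (r x : ℝ) : ℝ≥0∞ := ENNReal.ofReal (gR r x)

@[fun_prop]
lemma measurable_gE (r : ℝ) : Measurable (gE r) :=
  ENNReal.measurable_ofReal.comp (measurable_gR r)

lemma gR_shift (r t : ℝ) : (fun u => gR r (t - u)) =
    Set.indicator (Iic t) (fun u => Real.exp (-(r*t)) * Real.exp (r*u)) := by
  funext u
  rw [Set.indicator_apply]
  by_cases h : u ≤ t
  · rw [if_pos (mem_Iic.mpr h)]
    unfold gR
    rw [if_pos (sub_nonneg.mpr h), ← Real.exp_add]
    congr 1; ring
  · rw [if_neg (fun hh => h (mem_Iic.mp hh))]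
    unfold gR
    rw [if_neg (fun hh => h (sub_nonneg.mp hh))]

lemma integrable_gR_shift {r : ℝ} (hr : 0 < r) (t : ℝ) :
    Integrable (fun u => gR r (t - u)) := by
  rw [gR_shift]
  rw [integrable_indicator_iff measurableSet_Iic]
  exact (expInt hr t).const_mul _

lemma integral_gR_shift {r : ℝ} (hr : 0 < r) (t : ℝ) :
    ∫ u, gR r (t - u) = 1 / r := by
  rw [gR_shift, integral_indicator measurableSet_Iic, integral_const_mul,
    expIntegral hr t, ← mul_div_assoc, ← Real.exp_add]
  simp

lemma corr_fun_eq (r u u' : ℝ) : (fun s => gR r (u - s) * gR r (u' - s)) =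
    Set.indicator (Iic (min u u'))
      (fun s => Real.exp (-(u+u')*r) * Real.exp ((2*r)*s)) := by
  funext s
  rw [Set.indicator_apply]
  by_cases h1 : s ≤ u <;> by_cases h2 : s ≤ u'
  · rw [if_pos (mem_Iic.mpr (le_min h1 h2))]
    unfold gR
    rw [if_pos (sub_nonneg.mpr h1), if_pos (sub_nonneg.mpr h2),
      ← Real.exp_add, ← Real.exp_add]
    congr 1; ring
  · rw [if_neg (fun hh => h2 (le_trans (mem_Iic.mp hh) (min_le_right u u')))]
    unfold gR
    rw [if_neg (fun hh => h2 (sub_nonneg.mp hh)), mul_zero]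
  · rw [if_neg (fun hh => h1 (le_trans (mem_Iic.mp hh) (min_le_left u u')))]
    unfold gR
    rw [if_neg (fun hh => h1 (sub_nonneg.mp hh)), zero_mul]
  · rw [if_neg (fun hh => h1 (le_trans (mem_Iic.mp hh) (min_le_left u u')))]
    unfold gR
    rw [if_neg (fun hh => h1 (sub_nonneg.mp hh)), zero_mul]

lemma corr_integrable {r : ℝ} (hr : 0 < r) (u u' : ℝ) :
    Integrable (fun s => gR r (u - s) * gR r (u' - s)) := by
  rw [corr_fun_eq]
  rw [integrable_indicator_iff measurableSet_Iic]
  exact (expInt (by linarith) (min u u')).const_mul _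

lemma corr_integral {r : ℝ} (hr : 0 < r) (u u' : ℝ) :
    ∫ s, gR r (u - s) * gR r (u' - s) = Real.exp (-(r * |u - u'|)) / (2*r) := by
  rw [corr_fun_eq, integral_indicator measurableSet_Iic, integral_const_mul,
    expIntegral (by linarith : (0:ℝ) < 2*r) (min u u'), ← mul_div_assoc, ← Real.exp_add]
  congr 2
  rcases le_total u u' with h | h
  · rw [min_eq_left h, abs_of_nonpos (by linarith : u - u' ≤ 0)]; ring
  · rw [min_eq_right h, abs_of_nonneg (by linarith : 0 ≤ u - u')]; ring

lemma corrE {r : ℝ} (hr : 0 < r) (u u' : ℝ) :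
    ∫⁻ s, gE r (u - s) * gE r (u' - s)
      = ENNReal.ofReal (Real.exp (-(r * |u - u'|)) / (2*r)) := by
  have h : ∀ s : ℝ, gE r (u - s) * gE r (u' - s)
      = ENNReal.ofReal (gR r (u - s) * gR r (u' - s)) :=
    fun s => (ENNReal.ofReal_mul (gR_nonneg _ _)).symm
  simp_rw [h]
  rw [← ofReal_integral_eq_lintegral_ofReal (corr_integrable hr u u')
    (Eventually.of_forall fun s => mul_nonneg (gR_nonneg _ _) (gR_nonneg _ _)),
    corr_integral hr]

lemma expCorrIic_eq {c d : ℝ} (t u : ℝ) :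
    (fun v => Real.exp (-(t-v)*c) * Real.exp (-(u-v)*d))
      = fun v => Real.exp (-(t*c+u*d)) * Real.exp ((c+d)*v) := by
  funext v
  rw [← Real.exp_add, ← Real.exp_add]
  congr 1; ring

lemma expCorrIic_integrable {c d : ℝ} (hc : 0 < c) (hd : 0 < d) (t u : ℝ) :
    IntegrableOn (fun v => Real.exp (-(t-v)*c) * Real.exp (-(u-v)*d)) (Iic u) := by
  rw [expCorrIic_eq]
  exact (expInt (by linarith) u).const_mul _

lemma expCorrIic_integral {c d : ℝ} (hc : 0 < c) (hd : 0 < d) (t u : ℝ) :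
    ∫ v in Iic u, Real.exp (-(t-v)*c) * Real.exp (-(u-v)*d)
      = Real.exp (-(t-u)*c) / (c+d) := by
  rw [expCorrIic_eq, integral_const_mul, expIntegral (by linarith : (0:ℝ) < c+d) u,
    ← mul_div_assoc, ← Real.exp_add]
  congr 2; ring

lemma swap4 (P : ℝ → ℝ → ℝ → ℝ → ℝ≥0∞)
    (hm : Measurable fun q : (ℝ×ℝ)×(ℝ×ℝ) => P q.1.1 q.1.2 q.2.1 q.2.2) :
    (∫⁻ s₁ : ℝ, ∫⁻ s₂ : ℝ, ∫⁻ u : ℝ, ∫⁻ u' : ℝ, P s₁ s₂ u u')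
      = ∫⁻ u : ℝ, ∫⁻ u' : ℝ, ∫⁻ s₁ : ℝ, ∫⁻ s₂ : ℝ, P s₁ s₂ u u' := by
  set Q : (ℝ×ℝ)×(ℝ×ℝ) → ℝ≥0∞ := fun q => P q.1.1 q.1.2 q.2.1 q.2.2 with hQ
  have h1 : ∀ z : ℝ×ℝ, (∫⁻ u : ℝ, ∫⁻ u' : ℝ, Q (z,(u,u')))
      = ∫⁻ w : ℝ×ℝ, Q (z,w) ∂(volume.prod volume) :=
    fun z => (lintegral_prod _
      ((hm.comp (measurable_const.prodMk measurable_id)).aemeasurable)).symm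
  have h2 : ∀ w : ℝ×ℝ, (∫⁻ s₁ : ℝ, ∫⁻ s₂ : ℝ, Q ((s₁,s₂),w))
      = ∫⁻ z : ℝ×ℝ, Q (z,w) ∂(volume.prod volume) :=
    fun w => (lintegral_prod _
      ((hm.comp (measurable_id.prodMk measurable_const)).aemeasurable)).symm
  calc (∫⁻ s₁ : ℝ, ∫⁻ s₂ : ℝ, ∫⁻ u : ℝ, ∫⁻ u' : ℝ, P s₁ s₂ u u')
      = ∫⁻ s₁ : ℝ, ∫⁻ s₂ : ℝ, ∫⁻ w : ℝ×ℝ, Q ((s₁,s₂),w) ∂(volume.prod volume) := by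
        simp_rw [← h1 (_, _)]; rfl
    _ = ∫⁻ z : ℝ×ℝ, (∫⁻ w : ℝ×ℝ, Q (z,w) ∂(volume.prod volume)) ∂(volume.prod volume) :=
        (lintegral_prod _ (hm.lintegral_prod_right'.aemeasurable)).symm
    _ = ∫⁻ p : (ℝ×ℝ)×(ℝ×ℝ), Q p ∂((volume.prod volume).prod (volume.prod volume)) :=
        (lintegral_prod _ hm.aemeasurable).symm
    _ = ∫⁻ w : ℝ×ℝ, (∫⁻ z : ℝ×ℝ, Q (z,w) ∂(volume.prod volume)) ∂(volume.prod volume) :=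
        lintegral_prod_symm _ hm.aemeasurable
    _ = ∫⁻ u : ℝ, ∫⁻ u' : ℝ, ∫⁻ z : ℝ×ℝ, Q (z,(u,u')) ∂(volume.prod volume) :=
        lintegral_prod _ (hm.lintegral_prod_left'.aemeasurable)
    _ = ∫⁻ u : ℝ, ∫⁻ u' : ℝ, ∫⁻ s₁ : ℝ, ∫⁻ s₂ : ℝ, P s₁ s₂ u u' := by
        simp_rw [← h2 (_, _)]; rfl

lemma Kint {c d : ℝ} (hc : 0 < c) (hd : 0 < d) (t : ℝ) :
    (∫⁻ u : ℝ, ∫⁻ u' : ℝ,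
        ENNReal.ofReal (gR c (t-u) * gR c (t-u') * Real.exp (-(d * |u - u'|))))
      = ENNReal.ofReal (1/(c*(c+d))) := by
  set k : ℝ → ℝ → ℝ := fun u u' => gR c (t-u) * gR c (t-u') * Real.exp (-(d * |u - u'|))
    with hk
  have knn : ∀ u u', 0 ≤ k u u' := fun u u' =>
    mul_nonneg (mul_nonneg (gR_nonneg _ _) (gR_nonneg _ _)) (Real.exp_pos _).le
  have ksym : ∀ x y, k x y = k y x := by
    intro x y
    simp only [hk]
    rw [abs_sub_comm]
    ring
  have hkm : Measurable (fun p : ℝ×ℝ => ENNReal.ofReal (k p.1 p.2)) := by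
    simp only [hk]
    fun_prop
  -- measurability of the two halves
  have hmle : Measurable (fun p : ℝ×ℝ =>
      if p.2 ≤ p.1 then ENNReal.ofReal (k p.1 p.2) else 0) :=
    Measurable.ite (measurableSet_le measurable_snd measurable_fst) hkm measurable_const
  have hmlt : Measurable (fun p : ℝ×ℝ =>
      if p.1 < p.2 then ENNReal.ofReal (k p.1 p.2) else 0) :=
    Measurable.ite (measurableSet_lt measurable_fst measurable_snd) hkm measurable_const
  -- split the inner integral
  have hsplit : (∫⁻ u : ℝ, ∫⁻ u' : ℝ, ENNReal.ofReal (k u u'))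
      = (∫⁻ u : ℝ, ∫⁻ u' : ℝ, if u' ≤ u then ENNReal.ofReal (k u u') else 0)
        + ∫⁻ u : ℝ, ∫⁻ u' : ℝ, if u < u' then ENNReal.ofReal (k u u') else 0 := by
    rw [← lintegral_add_left (Measurable.lintegral_prod_right' hmle)]
    refine lintegral_congr fun u => ?_
    have hm1 : Measurable (fun u' : ℝ => if u' ≤ u then ENNReal.ofReal (k u u') else 0) := by
      exact hmle.comp (measurable_const.prodMk measurable_id)
    rw [← lintegral_add_left hm1]
    refine lintegral_congr fun u' => ?_
    rcases le_or_gt u' u with h | h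
    · rw [if_pos h, if_neg (not_lt.mpr h), add_zero]
    · rw [if_neg (not_le.mpr h), if_pos h, zero_add]
  -- the strict half equals the weak half
  have hBA : (∫⁻ u : ℝ, ∫⁻ u' : ℝ, if u < u' then ENNReal.ofReal (k u u') else 0)
      = ∫⁻ u : ℝ, ∫⁻ u' : ℝ, if u' ≤ u then ENNReal.ofReal (k u u') else 0 := by
    rw [lintegral_lintegral_swap (hmlt.aemeasurable)]
    refine lintegral_congr fun x => lintegral_congr_ae ?_
    have hx : ∀ᵐ y : ℝ ∂volume, y ≠ x := by
      rw [ae_iff]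
      simp only [ne_eq, not_not, Set.setOf_eq_eq_singleton]
      exact measure_singleton x
    filter_upwards [hx] with y hy
    rcases lt_or_gt_of_ne hy with h | h
    · rw [if_pos h, if_pos h.le, ksym]
    · rw [if_neg (not_lt.mpr h.le), if_neg (not_le.mpr h)]
  -- compute the weak half
  have hinner : ∀ u : ℝ, (∫⁻ u' : ℝ, if u' ≤ u then ENNReal.ofReal (k u u') else 0)
      = ENNReal.ofReal (gR c (t-u)) * ENNReal.ofReal (Real.exp (-(t-u)*c) / (c+d)) := by
    intro u
    by_cases htu : u ≤ t
    · have hpt : ∀ u' : ℝ, (if u' ≤ u then ENNReal.ofReal (k u u') else 0)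
          = Set.indicator (Iic u) (fun u' => ENNReal.ofReal (gR c (t-u))
            * ENNReal.ofReal (Real.exp (-(t-u')*c) * Real.exp (-(u-u')*d))) u' := by
        intro u'
        rw [Set.indicator_apply]
        by_cases h : u' ≤ u
        · rw [if_pos h, if_pos (mem_Iic.mpr h)]
          rw [← ENNReal.ofReal_mul (gR_nonneg _ _)]
          congr 1
          simp only [hk]
          have h1 : gR c (t - u') = Real.exp (-(t-u')*c) := by
            unfold gR
            rw [if_pos (by linarith : (0:ℝ) ≤ t - u')]
          have h2 : Real.exp (-(d * |u - u'|)) = Real.exp (-(u-u')*d) := by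
            rw [abs_of_nonneg (by linarith : (0:ℝ) ≤ u - u')]
            congr 1; ring
          rw [h1, h2]; ring
        · rw [if_neg h, if_neg (fun hh => h (mem_Iic.mp hh))]
      simp_rw [hpt]
      rw [lintegral_indicator measurableSet_Iic, lintegral_const_mul _ (by fun_prop)]
      congr 1
      rw [← ofReal_integral_eq_lintegral_ofReal (expCorrIic_integrable hc hd t u)
        (Eventually.of_forall fun v => mul_nonneg (Real.exp_pos _).le (Real.exp_pos _).le),
        expCorrIic_integral hc hd t u]
    · have hg0 : gR c (t - u) = 0 := by
        unfold gR
        rw [if_neg (fun hh => htu (sub_nonneg.mp hh))]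
      have : ∀ u' : ℝ, (if u' ≤ u then ENNReal.ofReal (k u u') else 0) = 0 := by
        intro u'
        split
        · simp only [hk, hg0, zero_mul, ENNReal.ofReal_zero]
        · rfl
      simp_rw [this]
      rw [lintegral_zero, hg0, ENNReal.ofReal_zero, zero_mul]
  have hA : (∫⁻ u : ℝ, ∫⁻ u' : ℝ, if u' ≤ u then ENNReal.ofReal (k u u') else 0)
      = ENNReal.ofReal ((1/(2*c)) * (1/(c+d))) := by
    simp_rw [hinner]
    have hpt2 : ∀ u : ℝ, ENNReal.ofReal (gR c (t-u))
        * ENNReal.ofReal (Real.exp (-(t-u)*c) / (c+d))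
        = ENNReal.ofReal (gR (2*c) (t-u) * (1/(c+d))) := by
      intro u
      rw [← ENNReal.ofReal_mul (gR_nonneg _ _)]
      congr 1
      unfold gR
      split
      · rw [← mul_div_assoc, ← Real.exp_add, mul_one_div]
        congr 1
        ring_nf
      · rw [zero_mul, zero_mul]
    simp_rw [hpt2]
    rw [← ofReal_integral_eq_lintegral_ofReal
      ((integrable_gR_shift (by linarith : (0:ℝ) < 2*c) t).mul_const _)
      (Eventually.of_forall fun u => mul_nonneg (gR_nonneg _ _) (by positivity))]
    rw [integral_mul_const, integral_gR_shift (by linarith : (0:ℝ) < 2*c) t]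
  rw [hsplit, hBA, hA, ← ENNReal.ofReal_add (by positivity) (by positivity)]
  congr 1
  field_simp
  ring

lemma keyT {a b c : ℝ} (ha : 0 < a) (hb : 0 < b) (hc : 0 < c) (t : ℝ) :
    (∫⁻ s₁ : ℝ, ∫⁻ s₂ : ℝ,
        (∫⁻ u : ℝ, gE c (t-u) * gE a (u-s₁) * gE b (u-s₂)) *
        (∫⁻ u' : ℝ, gE c (t-u') * gE a (u'-s₁) * gE b (u'-s₂)))
      = ENNReal.ofReal (1/(4*a*b*c*(a+b+c))) := by
  have hXm : ∀ s₁ s₂ : ℝ, Measurable (fun u : ℝ => gE c (t-u) * gE a (u-s₁) * gE b (u-s₂)) := by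
    intro s₁ s₂; fun_prop
  have hsq : ∀ s₁ s₂ : ℝ,
      (∫⁻ u : ℝ, gE c (t-u) * gE a (u-s₁) * gE b (u-s₂)) *
        (∫⁻ u' : ℝ, gE c (t-u') * gE a (u'-s₁) * gE b (u'-s₂))
      = ∫⁻ u : ℝ, ∫⁻ u' : ℝ, (gE c (t-u) * gE a (u-s₁) * gE b (u-s₂)) *
          (gE c (t-u') * gE a (u'-s₁) * gE b (u'-s₂)) := by
    intro s₁ s₂
    rw [← lintegral_mul_const _ (hXm s₁ s₂)]
    exact lintegral_congr fun u => (lintegral_const_mul _ (hXm s₁ s₂)).symm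
  simp_rw [hsq]
  rw [swap4 (fun s₁ s₂ u u' => (gE c (t-u) * gE a (u-s₁) * gE b (u-s₂)) *
      (gE c (t-u') * gE a (u'-s₁) * gE b (u'-s₂))) (by fun_prop)]
  have hstep : ∀ u u' : ℝ,
      (∫⁻ s₁ : ℝ, ∫⁻ s₂ : ℝ, (gE c (t-u) * gE a (u-s₁) * gE b (u-s₂)) *
          (gE c (t-u') * gE a (u'-s₁) * gE b (u'-s₂)))
      = ENNReal.ofReal ((gR c (t-u) * gR c (t-u')
          * Real.exp (-((a+b) * |u - u'|))) * (1/(4*a*b))) := by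
    intro u u'
    have h1 : ∀ s₁ s₂ : ℝ, (gE c (t-u) * gE a (u-s₁) * gE b (u-s₂)) *
          (gE c (t-u') * gE a (u'-s₁) * gE b (u'-s₂))
        = (gE c (t-u) * gE c (t-u') * (gE a (u-s₁) * gE a (u'-s₁)))
            * (gE b (u-s₂) * gE b (u'-s₂)) := by
      intro s₁ s₂; ring
    simp_rw [h1]
    have h2 : ∀ s₁ : ℝ, (∫⁻ s₂ : ℝ,
        (gE c (t-u) * gE c (t-u') * (gE a (u-s₁) * gE a (u'-s₁)))
            * (gE b (u-s₂) * gE b (u'-s₂)))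
        = (gE c (t-u) * gE c (t-u') * ENNReal.ofReal (Real.exp (-(b * |u - u'|)) / (2*b)))
            * (gE a (u-s₁) * gE a (u'-s₁)) := by
      intro s₁
      rw [lintegral_const_mul _ (by fun_prop), corrE hb u u']
      ring
    simp_rw [h2]
    rw [lintegral_const_mul _ (by fun_prop), corrE ha u u']
    unfold gE
    rw [← ENNReal.ofReal_mul (gR_nonneg _ _),
      ← ENNReal.ofReal_mul (mul_nonneg (gR_nonneg _ _) (gR_nonneg _ _)),
      ← ENNReal.ofReal_mul (mul_nonneg (mul_nonneg (gR_nonneg _ _) (gR_nonneg _ _))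
        (by positivity))]
    congr 1
    rw [show Real.exp (-((a+b) * |u-u'|))
        = Real.exp (-(b * |u - u'|)) * Real.exp (-(a * |u - u'|)) from by
      rw [← Real.exp_add]; congr 1; ring]
    ring
  simp_rw [hstep]
  have hnn : ∀ u u' : ℝ, 0 ≤ gR c (t-u) * gR c (t-u') * Real.exp (-((a+b) * |u - u'|)) :=
    fun u u' => mul_nonneg (mul_nonneg (gR_nonneg _ _) (gR_nonneg _ _)) (Real.exp_pos _).le
  have hsplitc : ∀ u u' : ℝ, ENNReal.ofReal ((gR c (t-u) * gR c (t-u')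
        * Real.exp (-((a+b) * |u - u'|))) * (1/(4*a*b)))
      = ENNReal.ofReal (gR c (t-u) * gR c (t-u') * Real.exp (-((a+b) * |u - u'|)))
        * ENNReal.ofReal (1/(4*a*b)) :=
    fun u u' => ENNReal.ofReal_mul (hnn u u')
  simp_rw [hsplitc]
  have hpull : ∀ u : ℝ, (∫⁻ u' : ℝ,
      ENNReal.ofReal (gR c (t-u) * gR c (t-u') * Real.exp (-((a+b) * |u - u'|)))
        * ENNReal.ofReal (1/(4*a*b)))
      = (∫⁻ u' : ℝ, ENNReal.ofReal (gR c (t-u) * gR c (t-u')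
          * Real.exp (-((a+b) * |u - u'|)))) * ENNReal.ofReal (1/(4*a*b)) :=
    fun u => lintegral_mul_const _ (by fun_prop)
  simp_rw [hpull]
  have hmint : Measurable (fun u : ℝ => ∫⁻ u' : ℝ,
      ENNReal.ofReal (gR c (t-u) * gR c (t-u') * Real.exp (-((a+b) * |u - u'|)))) := by
    exact Measurable.lintegral_prod_right'
      (f := fun p : ℝ×ℝ => ENNReal.ofReal (gR c (t-p.1) * gR c (t-p.2)
        * Real.exp (-((a+b) * |p.1 - p.2|)))) (by fun_prop)
  rw [lintegral_mul_const _ hmint, Kint hc (by linarith : (0:ℝ) < a+b) t,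
    ← ENNReal.ofReal_mul (div_pos one_pos (by nlinarith)).le]
  congr 1
  rw [div_mul_div_comm, one_mul]
  congr 1
  ring

lemma keyR {a b c : ℝ} (ha : 0 < a) (hb : 0 < b) (hc : 0 < c) (t : ℝ) :
    (∫ s₁ : ℝ, ∫ s₂ : ℝ, (Hker a b c t s₁ s₂) ^ 2) = 1 / (4*a*b*c*(a+b+c)) := by
  have hH : ∀ s₁ s₂ : ℝ, Hker a b c t s₁ s₂
      = ∫ u : ℝ, gR c (t-u) * gR a (u-s₁) * gR b (u-s₂) := by
    intro s₁ s₂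
    unfold Hker gR
    congr 1
    funext u
    simp only [sub_nonneg]
  have hFnn : ∀ s₁ s₂ u : ℝ, 0 ≤ gR c (t-u) * gR a (u-s₁) * gR b (u-s₂) :=
    fun _ _ _ => mul_nonneg (mul_nonneg (gR_nonneg _ _) (gR_nonneg _ _)) (gR_nonneg _ _)
  have hFint : ∀ s₁ s₂ : ℝ,
      Integrable (fun u => gR c (t-u) * gR a (u-s₁) * gR b (u-s₂)) := by
    intro s₁ s₂
    refine (integrable_gR_shift hc t).mono'
      ((by fun_prop : Measurable fun u => gR c (t-u) * gR a (u-s₁) * gR b (u-s₂))).aestronglyMeasurable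
      (Eventually.of_forall fun u => ?_)
    rw [Real.norm_of_nonneg (hFnn s₁ s₂ u)]
    calc gR c (t-u) * gR a (u-s₁) * gR b (u-s₂)
        ≤ gR c (t-u) * gR a (u-s₁) :=
          mul_le_of_le_one_right (mul_nonneg (gR_nonneg _ _) (gR_nonneg _ _))
            (gR_le_one hb.le _)
      _ ≤ gR c (t-u) := mul_le_of_le_one_right (gR_nonneg _ _) (gR_le_one ha.le _)
  have hHofReal : ∀ s₁ s₂ : ℝ, ENNReal.ofReal (Hker a b c t s₁ s₂)
      = ∫⁻ u : ℝ, gE c (t-u) * gE a (u-s₁) * gE b (u-s₂) := by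
    intro s₁ s₂
    rw [hH, ofReal_integral_eq_lintegral_ofReal (hFint s₁ s₂)
      (Eventually.of_forall (hFnn s₁ s₂))]
    refine lintegral_congr fun u => ?_
    unfold gE
    rw [ENNReal.ofReal_mul (mul_nonneg (gR_nonneg _ _) (gR_nonneg _ _)),
      ENNReal.ofReal_mul (gR_nonneg _ _)]
  have hHnn : ∀ s₁ s₂ : ℝ, 0 ≤ Hker a b c t s₁ s₂ := fun s₁ s₂ => by
    rw [hH]; exact integral_nonneg (hFnn s₁ s₂)
  have hsm : ∀ s₁ : ℝ, AEStronglyMeasurable (fun s₂ => (Hker a b c t s₁ s₂)^2) volume := by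
    intro s₁
    have hm0 : StronglyMeasurable
        (fun p : ℝ × ℝ => gR c (t-p.2) * gR a (p.2-s₁) * gR b (p.2-p.1)) :=
      (by fun_prop : Measurable fun p : ℝ × ℝ =>
        gR c (t-p.2) * gR a (p.2-s₁) * gR b (p.2-p.1)).stronglyMeasurable
    have hm1 : StronglyMeasurable fun s₂ : ℝ =>
        ∫ u : ℝ, gR c (t-u) * gR a (u-s₁) * gR b (u-s₂) :=
      hm0.integral_prod_right'
    have heq : (fun s₂ => (Hker a b c t s₁ s₂)^2)
        = fun s₂ => (∫ u : ℝ, gR c (t-u) * gR a (u-s₁) * gR b (u-s₂))^2 :=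
      funext fun s₂ => by rw [hH]
    rw [heq]
    simp_rw [pow_two]
    exact (hm1.mul hm1).aestronglyMeasurable
  set Λ : ℝ → ℝ≥0∞ := fun s₁ => ∫⁻ s₂ : ℝ,
      (∫⁻ u : ℝ, gE c (t-u) * gE a (u-s₁) * gE b (u-s₂)) *
      (∫⁻ u' : ℝ, gE c (t-u') * gE a (u'-s₁) * gE b (u'-s₂)) with hΛ
  have hstep1 : ∀ s₁ : ℝ, (∫ s₂ : ℝ, (Hker a b c t s₁ s₂)^2) = (Λ s₁).toReal := by
    intro s₁
    rw [integral_eq_lintegral_of_nonneg_ae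
      (Eventually.of_forall fun s₂ => sq_nonneg _) (hsm s₁)]
    congr 1
    refine lintegral_congr fun s₂ => ?_
    rw [pow_two, ENNReal.ofReal_mul (hHnn s₁ s₂), hHofReal s₁ s₂]
  simp_rw [hstep1]
  have hΛm : Measurable Λ := by
    have h1 : Measurable (fun p : ℝ × ℝ =>
        ∫⁻ u : ℝ, gE c (t-u) * gE a (u-p.1) * gE b (u-p.2)) :=
      Measurable.lintegral_prod_right'
        (f := fun q : (ℝ×ℝ)×ℝ => gE c (t-q.2) * gE a (q.2-q.1.1) * gE b (q.2-q.1.2))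
        (by fun_prop)
    exact Measurable.lintegral_prod_right'
      (f := fun p : ℝ×ℝ => (∫⁻ u : ℝ, gE c (t-u) * gE a (u-p.1) * gE b (u-p.2)) *
        (∫⁻ u' : ℝ, gE c (t-u') * gE a (u'-p.1) * gE b (u'-p.2))) (h1.mul h1)
  have hT : (∫⁻ s₁ : ℝ, Λ s₁) = ENNReal.ofReal (1/(4*a*b*c*(a+b+c))) := keyT ha hb hc t
  rw [integral_toReal hΛm.aemeasurable
    (ae_lt_top hΛm (by rw [hT]; exact ENNReal.ofReal_ne_top))]
  rw [hT]
  have hpos : (0:ℝ) < 4*a*b*c*(a+b+c) :=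
    mul_pos (mul_pos (mul_pos (mul_pos (by norm_num : (0:ℝ) < 4) ha) hb) hc)
      (by linarith)
  rw [ENNReal.toReal_ofReal (div_pos one_pos hpos).le]

/-- The squared `L²` norm of the kernel `H` equals `1/(4abc(a+b+c))`; in particular,
for the kernel `H_t^{ε,⧓}` it equals
`1/(4·α_ε(k₁)·α_ε(k₂)·α_ε(k₁+k₂)·(α_ε(k₁)+α_ε(k₂)+α_ε(k₁+k₂)))`. -/
theorem Hker_sq_integral (a b c t : ℝ) (ha : 0 < a) (hb : 0 < b) (hc : 0 < c) :
    (∫ s₁ : ℝ, ∫ s₂ : ℝ, (Hker a b c t s₁ s₂) ^ 2) = 1 / (4 * a * b * c * (a + b + c)) ∧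
      ∀ ε ∈ Set.Icc (0 : ℝ) 1, ∀ k₁ k₂ : Z3,
        (∫ s₁ : ℝ, ∫ s₂ : ℝ, (Hcup ε t k₁ k₂ s₁ s₂) ^ 2) =
          1 / (4 * alphaE ε k₁ * alphaE ε k₂ * alphaE ε (k₁ + k₂) *
            (alphaE ε k₁ + alphaE ε k₂ + alphaE ε (k₁ + k₂))) := by
  refine ⟨keyR ha hb hc t, ?_⟩
  intro ε hε k₁ k₂
  have hpos : ∀ k : Z3, 0 < alphaE ε k := by
    intro k
    unfold alphaE
    have h1 : 0 ≤ 4 * π ^ 2 * (knorm k) ^ 2 := by positivity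
    have h2 : 0 ≤ 16 * π ^ 4 * ε * (knorm k) ^ 4 :=
      mul_nonneg (mul_nonneg (by positivity) hε.1) (by positivity)
    linarith
  simpa only [Hcup] using keyR (hpos k₁) (hpos k₂) (hpos (k₁ + k₂)) t
end
end
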